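/- arXiv:1205.4658 — 9 statements merged into one kernel-verified Lean document; each statement's English description precedes it below -/
import Mathlib

section
/- Suppose 𝒟 is neighborhood closed, Φ is 𝒟-pullback asymptotically compact in X, and Φ has a closed measurable (with respect to the P-completion of F₂) 𝒟-pullback absorbing set K ∈ 𝒟. Then Φ has a 𝒟-pullback attractor A ∈ 𝒟, this attractor is unique in 𝒟, and for every ω₁ ∈ Ω₁ and ω₂ ∈ Ω₂ it is given by A(ω₁,ω₂) = Ω(K,ω₁,ω₂) = ∪_{B∈𝒟} Ω(B,ω₁,ω₂). -/
/-!
The attractor is the Ω-limit set of the absorbing set `K`. Asymptotic compactness makes each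
`Ω(B)`, `B ∈ 𝒟`, compact, invariant and attracting `B`; absorption by `K` gives
`Ω(B) ⊆ Ω(K) ⊆ K`, so `Ω(K)` attracts every member of `𝒟` and, `𝒟` being neighborhood closed,
belongs to `𝒟`. An invariant member of `𝒟` lies inside every closed family attracting `𝒟`,
which gives uniqueness.

For measurability, `infDist x Ω(K)` is the limit of `infDist x` of the pullback images of `K` at
integer times, since `Ω(K)` is contained in them and attracts them. Each of these is the
distance from `x` to the continuous image of a measurable random closed set; over a countable
dense set, `infDist y (F '' M) < r` unfolds into countably many conditions of the form
`infDist c M < ε` and `dist y (F d) ≤ q`, all measurable in the random parameter.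
-/

open Set Metric MeasureTheory Filter Topology

section RDS

variable {X : Type*} [MetricSpace X] [MeasurableSpace X] [BorelSpace X]
variable {Ω₁ : Type*} {Ω₂ : Type*} [MeasurableSpace Ω₂]

/-- `(Ω₁, θ₁)` is a parametric dynamical system. -/
def IsParamDS₁ (θ₁ : ℝ → Ω₁ → Ω₁) : Prop :=
  θ₁ 0 = id ∧ ∀ s t : ℝ, θ₁ (s + t) = θ₁ t ∘ θ₁ s

/-- `(Ω₂, F₂, P, θ₂)` is a measure-preserving parametric dynamical system. -/
def IsParamDS₂ (P : Measure Ω₂) (θ₂ : ℝ → Ω₂ → Ω₂) : Prop :=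
  Measurable (fun p : ℝ × Ω₂ => θ₂ p.1 p.2) ∧ θ₂ 0 = id ∧
    (∀ s t : ℝ, θ₂ (s + t) = θ₂ t ∘ θ₂ s) ∧ ∀ t : ℝ, MeasurePreserving (θ₂ t) P P

/-- `Φ` is a continuous cocycle on `X` over the two parametric dynamical systems. -/
def IsCocycle (θ₁ : ℝ → Ω₁ → Ω₁) (θ₂ : ℝ → Ω₂ → Ω₂)
    (Φ : ℝ → Ω₁ → Ω₂ → X → X) : Prop :=
  (∀ ω₁ : Ω₁, Measurable fun p : Ici (0:ℝ) × Ω₂ × X => Φ (p.1 : ℝ) ω₁ p.2.1 p.2.2) ∧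
  (∀ ω₁ ω₂, Φ 0 ω₁ ω₂ = id) ∧
  (∀ t τ : ℝ, 0 ≤ t → 0 ≤ τ → ∀ ω₁ ω₂,
      Φ (t + τ) ω₁ ω₂ = (Φ t (θ₁ τ ω₁) (θ₂ τ ω₂)) ∘ (Φ τ ω₁ ω₂)) ∧
  (∀ t : ℝ, 0 ≤ t → ∀ ω₁ ω₂, Continuous (Φ t ω₁ ω₂))

/-- The pullback image `Φ(t, θ₁(-t)ω₁, θ₂(-t)ω₂, B(θ₁(-t)ω₁, θ₂(-t)ω₂))`. -/
def pbImage (θ₁ : ℝ → Ω₁ → Ω₁) (θ₂ : ℝ → Ω₂ → Ω₂) (Φ : ℝ → Ω₁ → Ω₂ → X → X)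
    (B : Ω₁ → Ω₂ → Set X) (t : ℝ) (ω₁ : Ω₁) (ω₂ : Ω₂) : Set X :=
  Φ t (θ₁ (-t) ω₁) (θ₂ (-t) ω₂) '' B (θ₁ (-t) ω₁) (θ₂ (-t) ω₂)

/-- The collection `𝒟` is neighborhood closed. -/
def NbhdClosed (𝒟 : Set (Ω₁ → Ω₂ → Set X)) : Prop :=
  ∀ D ∈ 𝒟, ∃ ε > (0:ℝ), ∀ B : Ω₁ → Ω₂ → Set X,
    (∀ ω₁ ω₂, (B ω₁ ω₂).Nonempty ∧ B ω₁ ω₂ ⊆ thickening ε (D ω₁ ω₂)) → B ∈ 𝒟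

/-- `K` is a `𝒟`-pullback absorbing set for `Φ`. -/
def AbsorbsFam (θ₁ : ℝ → Ω₁ → Ω₁) (θ₂ : ℝ → Ω₂ → Ω₂) (Φ : ℝ → Ω₁ → Ω₂ → X → X)
    (𝒟 : Set (Ω₁ → Ω₂ → Set X)) (K : Ω₁ → Ω₂ → Set X) : Prop :=
  ∀ ω₁ ω₂, ∀ B ∈ 𝒟, ∃ T > (0:ℝ), ∀ t ≥ T, pbImage θ₁ θ₂ Φ B t ω₁ ω₂ ⊆ K ω₁ ω₂

/-- `K` is measurable with respect to the `P`-completion of the σ-algebra of `Ω₂`. -/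
def MeasurableFam (P : Measure Ω₂) (K : Ω₁ → Ω₂ → Set X) : Prop :=
  ∀ (x : X) (ω₁ : Ω₁), NullMeasurable (fun ω₂ => infDist x (K ω₁ ω₂)) P

/-- `Φ` is `𝒟`-pullback asymptotically compact in `X`. -/
def AsympCompact (θ₁ : ℝ → Ω₁ → Ω₁) (θ₂ : ℝ → Ω₂ → Ω₂) (Φ : ℝ → Ω₁ → Ω₂ → X → X)
    (𝒟 : Set (Ω₁ → Ω₂ → Set X)) : Prop :=
  ∀ ω₁ ω₂, ∀ B ∈ 𝒟, ∀ (t : ℕ → ℝ) (x : ℕ → X),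
    Tendsto t atTop atTop →
    (∀ n, x n ∈ B (θ₁ (-(t n)) ω₁) (θ₂ (-(t n)) ω₂)) →
    ∃ (φ : ℕ → ℕ) (y : X), StrictMono φ ∧
      Tendsto (fun n => Φ (t (φ n)) (θ₁ (-(t (φ n))) ω₁) (θ₂ (-(t (φ n))) ω₂) (x (φ n)))
        atTop (𝓝 y)

/-- `A` pullback attracts every member of `𝒟` (Hausdorff semidistance goes to `0`). -/
def AttractsFam (θ₁ : ℝ → Ω₁ → Ω₁) (θ₂ : ℝ → Ω₂ → Ω₂) (Φ : ℝ → Ω₁ → Ω₂ → X → X)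
    (𝒟 : Set (Ω₁ → Ω₂ → Set X)) (A : Ω₁ → Ω₂ → Set X) : Prop :=
  ∀ ω₁ ω₂, ∀ B ∈ 𝒟, ∀ ε > (0:ℝ), ∃ T : ℝ, ∀ t ≥ T,
    pbImage θ₁ θ₂ Φ B t ω₁ ω₂ ⊆ thickening ε (A ω₁ ω₂)

/-- `A` is a `𝒟`-pullback attractor for `Φ`. -/
def IsPullbackAttractor (P : Measure Ω₂) (θ₁ : ℝ → Ω₁ → Ω₁) (θ₂ : ℝ → Ω₂ → Ω₂)
    (Φ : ℝ → Ω₁ → Ω₂ → X → X) (𝒟 : Set (Ω₁ → Ω₂ → Set X)) (A : Ω₁ → Ω₂ → Set X) : Prop :=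
  A ∈ 𝒟 ∧ MeasurableFam P A ∧
  (∀ ω₁ ω₂, IsCompact (A ω₁ ω₂)) ∧
  (∀ t : ℝ, 0 ≤ t → ∀ ω₁ ω₂, Φ t ω₁ ω₂ '' A ω₁ ω₂ = A (θ₁ t ω₁) (θ₂ t ω₂)) ∧
  AttractsFam θ₁ θ₂ Φ 𝒟 A

/-- The Ω-limit set of a family `B`. -/
def omegaLimitFam (θ₁ : ℝ → Ω₁ → Ω₁) (θ₂ : ℝ → Ω₂ → Ω₂) (Φ : ℝ → Ω₁ → Ω₂ → X → X)
    (B : Ω₁ → Ω₂ → Set X) (ω₁ : Ω₁) (ω₂ : Ω₂) : Set X :=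
  ⋂ τ ∈ Ici (0:ℝ), closure (⋃ t ∈ Ici τ, pbImage θ₁ θ₂ Φ B t ω₁ ω₂)

end RDS

section OmegaLimit

variable {X : Type*} [MetricSpace X] {Ω₁ Ω₂ : Type*}
variable {θ₁ : ℝ → Ω₁ → Ω₁} {θ₂ : ℝ → Ω₂ → Ω₂} {Φ : ℝ → Ω₁ → Ω₂ → X → X}
variable {𝒟 : Set (Ω₁ → Ω₂ → Set X)} {B K : Ω₁ → Ω₂ → Set X} {ω₁ : Ω₁} {ω₂ : Ω₂}

theorem mem_omegaLimitFam_iff {y : X} :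
    y ∈ omegaLimitFam θ₁ θ₂ Φ B ω₁ ω₂ ↔
      ∀ (τ ε : ℝ), 0 < ε → ∃ t ≥ τ, ∃ x ∈ pbImage θ₁ θ₂ Φ B t ω₁ ω₂, dist y x < ε := by
  simp only [omegaLimitFam, mem_iInter₂, mem_Ici, Metric.mem_closure_iff, mem_iUnion₂,
    exists_prop]
  constructor
  · intro hy τ ε hε
    obtain ⟨x, ⟨t, ht, hx⟩, hyx⟩ := hy (max τ 0) (le_max_right τ 0) ε hε
    exact ⟨t, (le_max_left τ 0).trans ht, x, hx, hyx⟩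
  · intro hy τ _ ε hε
    obtain ⟨t, ht, x, hx, hyx⟩ := hy τ ε hε
    exact ⟨x, ⟨t, ht, hx⟩, hyx⟩

theorem isClosed_omegaLimitFam : IsClosed (omegaLimitFam θ₁ θ₂ Φ B ω₁ ω₂) :=
  isClosed_biInter fun _ _ => isClosed_closure

theorem exists_tendsto_omegaLimitFam (hac : AsympCompact θ₁ θ₂ Φ 𝒟) (hB : B ∈ 𝒟)
    {t : ℕ → ℝ} {x : ℕ → X} (ht : Tendsto t atTop atTop)
    (hx : ∀ n, x n ∈ pbImage θ₁ θ₂ Φ B (t n) ω₁ ω₂) :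
    ∃ φ : ℕ → ℕ, StrictMono φ ∧
      ∃ y ∈ omegaLimitFam θ₁ θ₂ Φ B ω₁ ω₂, Tendsto (x ∘ φ) atTop (𝓝 y) := by
  choose z hzB hzx using hx
  obtain ⟨φ, y, hφ, hy⟩ := hac ω₁ ω₂ B hB t z ht hzB
  have hxy : Tendsto (x ∘ φ) atTop (𝓝 y) := hy.congr fun n => hzx (φ n)
  refine ⟨φ, hφ, y, mem_omegaLimitFam_iff.2 fun τ ε hε => ?_, hxy⟩
  obtain ⟨n, hnτ, hnε⟩ := ((ht.comp hφ.tendsto_atTop).eventually_ge_atTop τ).and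
    (Metric.tendsto_nhds.1 hxy ε hε) |>.exists
  exact ⟨t (φ n), hnτ, x (φ n), hzx (φ n) ▸ mem_image_of_mem _ (hzB (φ n)),
    by rw [dist_comm]; exact hnε⟩

theorem omegaLimitFam_nonempty (hac : AsympCompact θ₁ θ₂ Φ 𝒟) (hB : B ∈ 𝒟)
    (hBne : ∀ ω₁ ω₂, (B ω₁ ω₂).Nonempty) : (omegaLimitFam θ₁ θ₂ Φ B ω₁ ω₂).Nonempty := by
  have hx : ∀ n : ℕ, (pbImage θ₁ θ₂ Φ B n ω₁ ω₂).Nonempty := fun n => (hBne _ _).image _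
  choose x hx using hx
  obtain ⟨-, -, y, hy, -⟩ := exists_tendsto_omegaLimitFam hac hB tendsto_natCast_atTop_atTop hx
  exact ⟨y, hy⟩

theorem isCompact_omegaLimitFam (hac : AsympCompact θ₁ θ₂ Φ 𝒟) (hB : B ∈ 𝒟) :
    IsCompact (omegaLimitFam θ₁ θ₂ Φ B ω₁ ω₂) := by
  refine IsSeqCompact.isCompact fun y hy => ?_
  have hx := fun k : ℕ => mem_omegaLimitFam_iff.1 (hy k) k (1 / (k + 1)) Nat.one_div_pos_of_nat
  choose t ht x hx hyx using hx
  obtain ⟨φ, hφ, z, hz, hxz⟩ :=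
    exists_tendsto_omegaLimitFam hac hB (tendsto_atTop_mono ht tendsto_natCast_atTop_atTop) hx
  refine ⟨z, hz, φ, hφ, hxz.congr_dist ?_⟩
  refine squeeze_zero (fun _ => dist_nonneg) (fun k => ?_)
    (tendsto_one_div_add_atTop_nhds_zero_nat.comp hφ.tendsto_atTop)
  rw [dist_comm]
  exact (hyx (φ k)).le

theorem pbImage_subset_thickening_omegaLimitFam (hac : AsympCompact θ₁ θ₂ Φ 𝒟) (hB : B ∈ 𝒟)
    {ε : ℝ} (hε : 0 < ε) :
    ∃ T : ℝ, ∀ t ≥ T, pbImage θ₁ θ₂ Φ B t ω₁ ω₂ ⊆ thickening ε (omegaLimitFam θ₁ θ₂ Φ B ω₁ ω₂) := by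
  by_contra! h
  choose t ht hnot using fun n : ℕ => h n
  choose x hx hxε using fun n => not_subset.1 (hnot n)
  obtain ⟨φ, -, y, hy, hxy⟩ :=
    exists_tendsto_omegaLimitFam hac hB (tendsto_atTop_mono ht tendsto_natCast_atTop_atTop) hx
  obtain ⟨n, hn⟩ := (hxy.eventually (isOpen_thickening.mem_nhds
    (self_subset_thickening hε _ hy))).exists
  exact hxε (φ n) hn

theorem omegaLimitFam_subset_of_absorbs (hKabs : AbsorbsFam θ₁ θ₂ Φ 𝒟 K)
    (hK : IsClosed (K ω₁ ω₂)) (hB : B ∈ 𝒟) :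
    omegaLimitFam θ₁ θ₂ Φ B ω₁ ω₂ ⊆ K ω₁ ω₂ := by
  obtain ⟨T, hT, habs⟩ := hKabs ω₁ ω₂ B hB
  calc omegaLimitFam θ₁ θ₂ Φ B ω₁ ω₂
      ⊆ closure (⋃ t ∈ Ici T, pbImage θ₁ θ₂ Φ B t ω₁ ω₂) := biInter_subset_of_mem hT.le
    _ ⊆ K ω₁ ω₂ := closure_minimal (iUnion₂_subset habs) hK

theorem NbhdClosed.mem_of_subset (h𝒟 : NbhdClosed 𝒟) {A D : Ω₁ → Ω₂ → Set X} (hD : D ∈ 𝒟)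
    (hA : ∀ ω₁ ω₂, (A ω₁ ω₂).Nonempty) (hAD : ∀ ω₁ ω₂, A ω₁ ω₂ ⊆ D ω₁ ω₂) : A ∈ 𝒟 := by
  obtain ⟨ε, hε, hnbhd⟩ := h𝒟 D hD
  exact hnbhd A fun ω₁ ω₂ => ⟨hA ω₁ ω₂, (hAD ω₁ ω₂).trans (self_subset_thickening hε _)⟩

end OmegaLimit

def IsInvariantFam {X Ω₁ Ω₂ : Type*} (θ₁ : ℝ → Ω₁ → Ω₁) (θ₂ : ℝ → Ω₂ → Ω₂)
    (Φ : ℝ → Ω₁ → Ω₂ → X → X) (C : Ω₁ → Ω₂ → Set X) : Prop :=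
  ∀ t : ℝ, 0 ≤ t → ∀ ω₁ ω₂, Φ t ω₁ ω₂ '' C ω₁ ω₂ = C (θ₁ t ω₁) (θ₂ t ω₂)

section Flow

variable {X Ω₁ Ω₂ : Type*} [MeasurableSpace Ω₂] {P : Measure Ω₂}
variable {θ₁ : ℝ → Ω₁ → Ω₁} {θ₂ : ℝ → Ω₂ → Ω₂} {Φ : ℝ → Ω₁ → Ω₂ → X → X}
variable {C : Ω₁ → Ω₂ → Set X}

theorem IsParamDS₁.apply_apply (hθ₁ : IsParamDS₁ θ₁) (s t : ℝ) (ω₁ : Ω₁) :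
    θ₁ t (θ₁ s ω₁) = θ₁ (s + t) ω₁ := by
  rw [hθ₁.2 s t, Function.comp_apply]

theorem IsParamDS₁.apply_apply_neg (hθ₁ : IsParamDS₁ θ₁) (t : ℝ) (ω₁ : Ω₁) :
    θ₁ t (θ₁ (-t) ω₁) = ω₁ := by
  rw [hθ₁.apply_apply, neg_add_cancel, hθ₁.1, id]

theorem IsParamDS₁.apply_neg_apply (hθ₁ : IsParamDS₁ θ₁) (t : ℝ) (ω₁ : Ω₁) :
    θ₁ (-t) (θ₁ t ω₁) = ω₁ := by
  simpa using hθ₁.apply_apply_neg (-t) ω₁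

theorem IsParamDS₂.apply_apply (hθ₂ : IsParamDS₂ P θ₂) (s t : ℝ) (ω₂ : Ω₂) :
    θ₂ t (θ₂ s ω₂) = θ₂ (s + t) ω₂ := by
  rw [hθ₂.2.2.1 s t, Function.comp_apply]

theorem IsParamDS₂.apply_apply_neg (hθ₂ : IsParamDS₂ P θ₂) (t : ℝ) (ω₂ : Ω₂) :
    θ₂ t (θ₂ (-t) ω₂) = ω₂ := by
  rw [hθ₂.apply_apply, neg_add_cancel, hθ₂.2.1, id]

theorem IsParamDS₂.apply_neg_apply (hθ₂ : IsParamDS₂ P θ₂) (t : ℝ) (ω₂ : Ω₂) :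
    θ₂ (-t) (θ₂ t ω₂) = ω₂ := by
  simpa using hθ₂.apply_apply_neg (-t) ω₂

theorem IsInvariantFam.pbImage_eq (hθ₁ : IsParamDS₁ θ₁) (hθ₂ : IsParamDS₂ P θ₂)
    (hC : IsInvariantFam θ₁ θ₂ Φ C) {t : ℝ} (ht : 0 ≤ t) (ω₁ : Ω₁) (ω₂ : Ω₂) :
    pbImage θ₁ θ₂ Φ C t ω₁ ω₂ = C ω₁ ω₂ := by
  rw [pbImage, hC t ht, hθ₁.apply_apply_neg, hθ₂.apply_apply_neg]

end Flow

section Invariant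

variable {X : Type*} [MetricSpace X] {Ω₁ Ω₂ : Type*} [MeasurableSpace Ω₂] {P : Measure Ω₂}
variable {θ₁ : ℝ → Ω₁ → Ω₁} {θ₂ : ℝ → Ω₂ → Ω₂} {Φ : ℝ → Ω₁ → Ω₂ → X → X}
variable {𝒟 : Set (Ω₁ → Ω₂ → Set X)} {A C : Ω₁ → Ω₂ → Set X} {ω₁ : Ω₁} {ω₂ : Ω₂}

theorem IsInvariantFam.subset_of_attracts (hθ₁ : IsParamDS₁ θ₁) (hθ₂ : IsParamDS₂ P θ₂)
    (hC : IsInvariantFam θ₁ θ₂ Φ C) (hC𝒟 : C ∈ 𝒟) (hA : AttractsFam θ₁ θ₂ Φ 𝒟 A)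
    (hAcl : IsClosed (A ω₁ ω₂)) : C ω₁ ω₂ ⊆ A ω₁ ω₂ := by
  rw [← hAcl.closure_eq, closure_eq_iInter_thickening]
  refine subset_iInter₂ fun ε hε => ?_
  obtain ⟨T, hT⟩ := hA ω₁ ω₂ C hC𝒟 ε hε
  rw [← hC.pbImage_eq hθ₁ hθ₂ (le_max_right T 0) ω₁ ω₂]
  exact hT _ (le_max_left T 0)

end Invariant

section Cocycle

variable {X : Type*} [MetricSpace X] [MeasurableSpace X] {Ω₁ Ω₂ : Type*} [MeasurableSpace Ω₂]
variable {P : Measure Ω₂} {θ₁ : ℝ → Ω₁ → Ω₁} {θ₂ : ℝ → Ω₂ → Ω₂} {Φ : ℝ → Ω₁ → Ω₂ → X → X}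
variable {𝒟 : Set (Ω₁ → Ω₂ → Set X)} {B K : Ω₁ → Ω₂ → Set X} {ω₁ : Ω₁} {ω₂ : Ω₂}

theorem pbImage_add (hθ₁ : IsParamDS₁ θ₁) (hθ₂ : IsParamDS₂ P θ₂) (hΦ : IsCocycle θ₁ θ₂ Φ)
    {τ s : ℝ} (hτ : 0 ≤ τ) (hs : 0 ≤ s) :
    pbImage θ₁ θ₂ Φ B (τ + s) ω₁ ω₂ =
      Φ τ (θ₁ (-τ) ω₁) (θ₂ (-τ) ω₂) '' pbImage θ₁ θ₂ Φ B s (θ₁ (-τ) ω₁) (θ₂ (-τ) ω₂) := by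
  have h₁ : θ₁ s (θ₁ (-(τ + s)) ω₁) = θ₁ (-τ) ω₁ := by rw [hθ₁.apply_apply]; ring_nf
  have h₂ : θ₂ s (θ₂ (-(τ + s)) ω₂) = θ₂ (-τ) ω₂ := by rw [hθ₂.apply_apply]; ring_nf
  have hcoc := hΦ.2.2.1 τ s hτ hs (θ₁ (-(τ + s)) ω₁) (θ₂ (-(τ + s)) ω₂)
  rw [h₁, h₂] at hcoc
  simp only [pbImage, image_image, hθ₁.apply_apply, hθ₂.apply_apply, ← neg_add, hcoc,
    Function.comp_apply]

theorem pbImage_add_apply (hθ₁ : IsParamDS₁ θ₁) (hθ₂ : IsParamDS₂ P θ₂)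
    (hΦ : IsCocycle θ₁ θ₂ Φ) {t s : ℝ} (ht : 0 ≤ t) (hs : 0 ≤ s) :
    pbImage θ₁ θ₂ Φ B (t + s) (θ₁ t ω₁) (θ₂ t ω₂) = Φ t ω₁ ω₂ '' pbImage θ₁ θ₂ Φ B s ω₁ ω₂ := by
  rw [pbImage_add hθ₁ hθ₂ hΦ ht hs, hθ₁.apply_neg_apply, hθ₂.apply_neg_apply]

theorem omegaLimitFam_subset_omegaLimitFam_of_absorbs (hθ₁ : IsParamDS₁ θ₁)
    (hθ₂ : IsParamDS₂ P θ₂) (hΦ : IsCocycle θ₁ θ₂ Φ) (hKabs : AbsorbsFam θ₁ θ₂ Φ 𝒟 K)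
    (hB : B ∈ 𝒟) : omegaLimitFam θ₁ θ₂ Φ B ω₁ ω₂ ⊆ omegaLimitFam θ₁ θ₂ Φ K ω₁ ω₂ := by
  intro y hy
  refine mem_omegaLimitFam_iff.2 fun τ ε hε => ?_
  set τ' := max τ 0
  obtain ⟨T, hT, habs⟩ := hKabs (θ₁ (-τ') ω₁) (θ₂ (-τ') ω₂) B hB
  obtain ⟨t, ht, x, hx, hyx⟩ := mem_omegaLimitFam_iff.1 hy (τ' + T) ε hε
  refine ⟨τ', le_max_left τ 0, x, ?_, hyx⟩
  rw [← add_sub_cancel τ' t, pbImage_add hθ₁ hθ₂ hΦ (le_max_right τ 0) (by linarith)] at hx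
  exact image_mono (habs _ (by linarith)) hx

theorem isInvariantFam_omegaLimitFam (hθ₁ : IsParamDS₁ θ₁) (hθ₂ : IsParamDS₂ P θ₂)
    (hΦ : IsCocycle θ₁ θ₂ Φ) (hac : AsympCompact θ₁ θ₂ Φ 𝒟) (hB : B ∈ 𝒟) :
    IsInvariantFam θ₁ θ₂ Φ (omegaLimitFam θ₁ θ₂ Φ B) := by
  intro t ht ω₁ ω₂
  have hΦt := hΦ.2.2.2 t ht ω₁ ω₂
  apply Subset.antisymm
  · rintro - ⟨y, hy, rfl⟩
    refine mem_omegaLimitFam_iff.2 fun τ ε hε => ?_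
    obtain ⟨δ, hδ, hΦδ⟩ := Metric.continuous_iff.1 hΦt y ε hε
    obtain ⟨s, hs, x, hx, hyx⟩ := mem_omegaLimitFam_iff.1 hy (max (τ - t) 0) δ hδ
    have hs0 : 0 ≤ s := (le_max_right _ _).trans hs
    refine ⟨t + s, by linarith [le_max_left (τ - t) 0], Φ t ω₁ ω₂ x, ?_, ?_⟩
    · rw [pbImage_add_apply hθ₁ hθ₂ hΦ ht hs0]
      exact mem_image_of_mem _ hx
    · rw [dist_comm]
      exact hΦδ x (by rwa [dist_comm])
  · intro z hz
    have hx := fun n : ℕ =>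
      mem_omegaLimitFam_iff.1 hz (n + t) (1 / (n + 1)) Nat.one_div_pos_of_nat
    choose s hs x hx hzx using hx
    have hst : ∀ n : ℕ, (n : ℝ) ≤ s n - t := fun n => le_sub_iff_add_le.2 (hs n)
    have hw : ∀ n, x n ∈ Φ t ω₁ ω₂ '' pbImage θ₁ θ₂ Φ B (s n - t) ω₁ ω₂ := fun n => by
      rw [← pbImage_add_apply hθ₁ hθ₂ hΦ ht ((Nat.cast_nonneg n).trans (hst n)), add_sub_cancel]
      exact hx n
    choose w hw hwx using hw
    obtain ⟨φ, hφ, y, hy, hwy⟩ := exists_tendsto_omegaLimitFam hac hB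
      (tendsto_atTop_mono hst tendsto_natCast_atTop_atTop) hw
    have hxz : Tendsto x atTop (𝓝 z) :=
      tendsto_iff_dist_tendsto_zero.2 <| squeeze_zero (fun _ => dist_nonneg)
        (fun n => by rw [dist_comm]; exact (hzx n).le) tendsto_one_div_add_atTop_nhds_zero_nat
    refine ⟨y, hy, tendsto_nhds_unique ((hΦt.tendsto y).comp hwy) ?_⟩
    exact (hxz.comp hφ.tendsto_atTop).congr fun n => (hwx (φ n)).symm

theorem attractsFam_omegaLimitFam_of_absorbs (hθ₁ : IsParamDS₁ θ₁) (hθ₂ : IsParamDS₂ P θ₂)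
    (hΦ : IsCocycle θ₁ θ₂ Φ) (hac : AsympCompact θ₁ θ₂ Φ 𝒟) (hKabs : AbsorbsFam θ₁ θ₂ Φ 𝒟 K) :
    AttractsFam θ₁ θ₂ Φ 𝒟 (omegaLimitFam θ₁ θ₂ Φ K) := by
  intro ω₁ ω₂ B hB ε hε
  obtain ⟨T, hT⟩ := pbImage_subset_thickening_omegaLimitFam (ω₁ := ω₁) (ω₂ := ω₂) hac hB hε
  exact ⟨T, fun t ht => (hT t ht).trans (thickening_subset_of_subset ε
    (omegaLimitFam_subset_omegaLimitFam_of_absorbs hθ₁ hθ₂ hΦ hKabs hB))⟩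

end Cocycle

section Measurability

variable {X : Type*} [PseudoMetricSpace X]

theorem exists_mem_lt_iff_of_dense {D : Set X} (hD : Dense D) {s : Set X} {g : X → ℝ}
    (hg : Continuous g) {r : ℝ} :
    (∃ z ∈ s, g z < r) ↔ ∃ q : ℚ, (q : ℝ) < r ∧ ∃ c ∈ D, ∃ n : ℕ,
      (∃ z ∈ s, dist c z < 1 / (n + 1)) ∧ ∀ d ∈ D, dist d c < 1 / (n + 1) → g d ≤ q := by
  constructor
  · rintro ⟨z, hz, hgz⟩
    obtain ⟨q, hgq, hqr⟩ := exists_rat_btwn hgz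
    obtain ⟨δ, hδ, hball⟩ := Metric.isOpen_iff.1 (isOpen_lt hg continuous_const) z hgq
    obtain ⟨n, hn⟩ := exists_nat_one_div_lt (half_pos hδ)
    obtain ⟨c, hc, hzc⟩ := hD.exists_dist_lt z (Nat.one_div_pos_of_nat (n := n))
    refine ⟨q, hqr, c, hc, n, ⟨z, hz, by rwa [dist_comm]⟩, fun d _ hdc => (hball ?_).le⟩
    calc dist d z ≤ dist d c + dist z c := dist_triangle_right _ _ _
      _ < δ := by linarith
  · rintro ⟨q, hqr, c, -, n, ⟨z, hz, hcz⟩, hq⟩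
    have hzD : z ∈ closure (ball c (1 / (n + 1)) ∩ D) :=
      hD.open_subset_closure_inter isOpen_ball (mem_ball'.2 hcz)
    have hDq : closure (ball c (1 / (n + 1)) ∩ D) ⊆ {x | g x ≤ q} :=
      closure_minimal (fun d ⟨hdc, hd⟩ => hq d hd hdc) (isClosed_le hg continuous_const)
    exact ⟨z, hz, (hDq hzD).trans_lt hqr⟩

theorem tendsto_infDist_of_subset_of_subset_thickening {ι : Type*} {l : Filter ι} {A : Set X}
    {S : ι → Set X} (hA : A.Nonempty) (hAS : ∀ i, A ⊆ S i)
    (hSA : ∀ ε > 0, ∀ᶠ i in l, S i ⊆ thickening ε A) (x : X) :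
    Tendsto (fun i => infDist x (S i)) l (𝓝 (infDist x A)) := by
  refine Metric.tendsto_nhds.2 fun ε hε => ?_
  filter_upwards [hSA (ε / 2) (half_pos hε)] with i hi
  have hle : infDist x (S i) ≤ infDist x A := infDist_le_infDist_of_subset (hAS i) hA
  obtain ⟨z, hz, hxz⟩ := (infDist_lt_iff (hA.mono (hAS i))).1
    (lt_add_of_pos_right (infDist x (S i)) (half_pos hε))
  obtain ⟨a, ha, hza⟩ := mem_thickening_iff.1 (hi hz)
  have hlt : infDist x A < infDist x (S i) + ε := calc
    infDist x A ≤ dist x z + dist z a := (infDist_le_dist_of_mem ha).trans (dist_triangle _ _ _)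
    _ < infDist x (S i) + ε := by linarith
  rw [Real.dist_eq, abs_lt]
  constructor <;> linarith

variable [TopologicalSpace.SeparableSpace X] {Ω : Type*} [MeasurableSpace Ω] {μ : Measure Ω}

theorem nullMeasurable_infDist_image {Y : Type*} [PseudoMetricSpace Y] [MeasurableSpace Y]
    [OpensMeasurableSpace Y] {M : Ω → Set X} {F : Ω → X → Y} (hMne : ∀ ω, (M ω).Nonempty)
    (hM : ∀ z, NullMeasurable (fun ω => infDist z (M ω)) μ) (hF : ∀ z, Measurable fun ω => F ω z)
    (hFc : ∀ ω, Continuous (F ω)) (y : Y) :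
    NullMeasurable (fun ω => infDist y (F ω '' M ω)) μ := by
  obtain ⟨D, hDc, hD⟩ := TopologicalSpace.exists_countable_dense X
  suffices h : ∀ r : ℝ, NullMeasurableSet ((fun ω => infDist y (F ω '' M ω)) ⁻¹' Iio r) μ from
    measurable_of_Iio h
  intro r
  have hpre : (fun ω => infDist y (F ω '' M ω)) ⁻¹' Iio r =
      ⋃ q : ℚ, ⋃ (_ : (q : ℝ) < r), ⋃ c ∈ D, ⋃ n : ℕ,
        {ω | infDist c (M ω) < 1 / (n + 1)} ∩
          ⋂ d ∈ D, ⋂ (_ : dist d c < 1 / (n + 1)), {ω | dist y (F ω d) ≤ q} := by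
    ext ω
    simp only [mem_preimage, mem_Iio, mem_iUnion, mem_iInter, mem_inter_iff, mem_ofPred_eq,
      exists_prop, infDist_lt_iff (hMne ω), infDist_lt_iff ((hMne ω).image _), exists_mem_image]
    exact exists_mem_lt_iff_of_dense hD (continuous_const.dist (hFc ω))
  rw [hpre]
  refine NullMeasurableSet.iUnion fun q => NullMeasurableSet.iUnion fun _ =>
    NullMeasurableSet.biUnion hDc fun c _ => NullMeasurableSet.iUnion fun n =>
      ((hM c) measurableSet_Iio).inter (MeasurableSet.nullMeasurableSet ?_)
  exact MeasurableSet.biInter hDc fun d _ => MeasurableSet.iInter fun _ =>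
    measurableSet_le ((continuous_const.dist continuous_id).measurable.comp (hF d))
      measurable_const

end Measurability

theorem measurableFam_omegaLimitFam {X : Type*} [MetricSpace X] [MeasurableSpace X]
    [BorelSpace X] [TopologicalSpace.SeparableSpace X] {Ω₁ Ω₂ : Type*} [MeasurableSpace Ω₂]
    {P : Measure Ω₂} {θ₁ : ℝ → Ω₁ → Ω₁} {θ₂ : ℝ → Ω₂ → Ω₂} {Φ : ℝ → Ω₁ → Ω₂ → X → X}
    {𝒟 : Set (Ω₁ → Ω₂ → Set X)} {K : Ω₁ → Ω₂ → Set X} (hθ₁ : IsParamDS₁ θ₁)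
    (hθ₂ : IsParamDS₂ P θ₂) (hΦ : IsCocycle θ₁ θ₂ Φ) (hac : AsympCompact θ₁ θ₂ Φ 𝒟)
    (hK𝒟 : K ∈ 𝒟) (hKne : ∀ ω₁ ω₂, (K ω₁ ω₂).Nonempty) (hKcl : ∀ ω₁ ω₂, IsClosed (K ω₁ ω₂))
    (hKm : MeasurableFam P K) (hKabs : AbsorbsFam θ₁ θ₂ Φ 𝒟 K) :
    MeasurableFam P (omegaLimitFam θ₁ θ₂ Φ K) := by
  intro x ω₁
  have hApb : ∀ (n : ℕ) ω₂, omegaLimitFam θ₁ θ₂ Φ K ω₁ ω₂ ⊆ pbImage θ₁ θ₂ Φ K n ω₁ ω₂ :=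
      fun n ω₂ => by
    rw [← (isInvariantFam_omegaLimitFam hθ₁ hθ₂ hΦ hac hK𝒟).pbImage_eq hθ₁ hθ₂
      n.cast_nonneg ω₁ ω₂]
    exact image_mono (omegaLimitFam_subset_of_absorbs hKabs (hKcl _ _) hK𝒟)
  have hlim : ∀ ω₂, Tendsto (fun n : ℕ => infDist x (pbImage θ₁ θ₂ Φ K n ω₁ ω₂)) atTop
      (𝓝 (infDist x (omegaLimitFam θ₁ θ₂ Φ K ω₁ ω₂))) := fun ω₂ =>
    tendsto_infDist_of_subset_of_subset_thickening (omegaLimitFam_nonempty hac hK𝒟 hKne)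
      (hApb · ω₂) (fun ε hε => by
        obtain ⟨T, hT⟩ := attractsFam_omegaLimitFam_of_absorbs hθ₁ hθ₂ hΦ hac hKabs ω₁ ω₂ K hK𝒟 ε hε
        filter_upwards [tendsto_natCast_atTop_atTop.eventually_ge_atTop T] with n hn
        exact hT n hn) x
  have hmeas : ∀ n : ℕ,
      NullMeasurable (fun ω₂ => infDist x (pbImage θ₁ θ₂ Φ K n ω₁ ω₂)) P := fun n => by
    set ν := θ₁ (-(n : ℝ)) ω₁
    have hΦν : ∀ z, Measurable fun ω => Φ n ν ω z := fun z =>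
      (hΦ.1 ν).comp (f := fun ω => ((⟨n, mem_Ici.2 n.cast_nonneg⟩ : Ici (0 : ℝ)), ω, z))
        (measurable_const.prodMk measurable_prodMk_right)
    exact (nullMeasurable_infDist_image (fun _ => hKne _ _) (fun z => hKm z ν) hΦν
      (hΦ.2.2.2 n n.cast_nonneg ν) x).comp_quasiMeasurePreserving
        (hθ₂.2.2.2 (-(n : ℝ))).quasiMeasurePreserving
  exact measurable_of_tendsto_metrizable hmeas (tendsto_pi_nhds.2 hlim)

section RDS

variable {X : Type*} [MetricSpace X] [MeasurableSpace X] [BorelSpace X]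
variable {Ω₁ : Type*} {Ω₂ : Type*} [MeasurableSpace Ω₂]

theorem pullback_attractor_existence_uniqueness_general
    [TopologicalSpace.SeparableSpace X]
    (θ₁ : ℝ → Ω₁ → Ω₁) (θ₂ : ℝ → Ω₂ → Ω₂)
    (P : Measure Ω₂)
    (Φ : ℝ → Ω₁ → Ω₂ → X → X)
    (𝒟 : Set (Ω₁ → Ω₂ → Set X))
    (hθ₁ : IsParamDS₁ θ₁) (hθ₂ : IsParamDS₂ P θ₂)
    (hΦ : IsCocycle θ₁ θ₂ Φ)
    (h𝒟 : NbhdClosed 𝒟)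
    (hac : AsympCompact θ₁ θ₂ Φ 𝒟)
    (K : Ω₁ → Ω₂ → Set X) (hK𝒟 : K ∈ 𝒟)
    (hKcl : ∀ ω₁ ω₂, (K ω₁ ω₂).Nonempty ∧ IsClosed (K ω₁ ω₂))
    (hKm : MeasurableFam P K)
    (hKabs : AbsorbsFam θ₁ θ₂ Φ 𝒟 K) :
    ∃ A : Ω₁ → Ω₂ → Set X,
      IsPullbackAttractor P θ₁ θ₂ Φ 𝒟 A ∧
      (∀ A' : Ω₁ → Ω₂ → Set X, IsPullbackAttractor P θ₁ θ₂ Φ 𝒟 A' →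
        ∀ ω₁ ω₂, A' ω₁ ω₂ = A ω₁ ω₂) ∧
      (∀ ω₁ ω₂, A ω₁ ω₂ = omegaLimitFam θ₁ θ₂ Φ K ω₁ ω₂) ∧
      (∀ ω₁ ω₂, A ω₁ ω₂ = ⋃ B ∈ 𝒟, omegaLimitFam θ₁ θ₂ Φ B ω₁ ω₂) := by
  have hKne := fun ω₁ ω₂ => (hKcl ω₁ ω₂).1
  have hKclosed := fun ω₁ ω₂ => (hKcl ω₁ ω₂).2
  have hAinv := isInvariantFam_omegaLimitFam hθ₁ hθ₂ hΦ hac hK𝒟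
  have hAatt := attractsFam_omegaLimitFam_of_absorbs hθ₁ hθ₂ hΦ hac hKabs
  have hA𝒟 : omegaLimitFam θ₁ θ₂ Φ K ∈ 𝒟 :=
    h𝒟.mem_of_subset hK𝒟 (fun _ _ => omegaLimitFam_nonempty hac hK𝒟 hKne)
      (fun _ _ => omegaLimitFam_subset_of_absorbs hKabs (hKclosed _ _) hK𝒟)
  refine ⟨omegaLimitFam θ₁ θ₂ Φ K, ⟨hA𝒟, ?_, fun _ _ => isCompact_omegaLimitFam hac hK𝒟,
    hAinv, hAatt⟩, ?_, fun _ _ => rfl, fun ω₁ ω₂ => ?_⟩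
  · exact measurableFam_omegaLimitFam hθ₁ hθ₂ hΦ hac hK𝒟 hKne hKclosed hKm hKabs
  · rintro A' ⟨hA'𝒟, -, hA'cpt, hA'inv, hA'att⟩ ω₁ ω₂
    exact (IsInvariantFam.subset_of_attracts hθ₁ hθ₂ hA'inv hA'𝒟 hAatt
      isClosed_omegaLimitFam).antisymm (hAinv.subset_of_attracts hθ₁ hθ₂ hA𝒟 hA'att (hA'cpt ω₁ ω₂).isClosed)
  · exact (subset_biUnion_of_mem (u := fun B => omegaLimitFam θ₁ θ₂ Φ B ω₁ ω₂) hK𝒟).antisymm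
      (iUnion₂_subset fun B hB => omegaLimitFam_subset_omegaLimitFam_of_absorbs hθ₁ hθ₂ hΦ hKabs hB)

/-- Proposition 2.1, existence part. If `𝒟` is neighborhood closed, `Φ` is
`𝒟`-pullback asymptotically compact and has a closed measurable `𝒟`-pullback absorbing set
`K ∈ 𝒟`, then `Φ` has a unique `𝒟`-pullback attractor `A ∈ 𝒟`, given by
`A(ω₁,ω₂) = Ω(K,ω₁,ω₂) = ⋃_{B ∈ 𝒟} Ω(B,ω₁,ω₂)`. -/
theorem pullback_attractor_existence_uniqueness
    [CompleteSpace X] [TopologicalSpace.SeparableSpace X] [Nonempty Ω₁]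
    (θ₁ : ℝ → Ω₁ → Ω₁) (θ₂ : ℝ → Ω₂ → Ω₂)
    (P : Measure Ω₂) [IsProbabilityMeasure P]
    (Φ : ℝ → Ω₁ → Ω₂ → X → X)
    (𝒟 : Set (Ω₁ → Ω₂ → Set X))
    (hθ₁ : IsParamDS₁ θ₁) (hθ₂ : IsParamDS₂ P θ₂)
    (hΦ : IsCocycle θ₁ θ₂ Φ)
    (h𝒟ne : ∀ D ∈ 𝒟, ∀ ω₁ ω₂, (D ω₁ ω₂).Nonempty)
    (h𝒟 : NbhdClosed 𝒟)
    (hac : AsympCompact θ₁ θ₂ Φ 𝒟)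
    (K : Ω₁ → Ω₂ → Set X) (hK𝒟 : K ∈ 𝒟)
    (hKcl : ∀ ω₁ ω₂, (K ω₁ ω₂).Nonempty ∧ IsClosed (K ω₁ ω₂))
    (hKm : MeasurableFam P K)
    (hKabs : AbsorbsFam θ₁ θ₂ Φ 𝒟 K) :
    ∃ A : Ω₁ → Ω₂ → Set X,
      IsPullbackAttractor P θ₁ θ₂ Φ 𝒟 A ∧
      (∀ A' : Ω₁ → Ω₂ → Set X, IsPullbackAttractor P θ₁ θ₂ Φ 𝒟 A' →
        ∀ ω₁ ω₂, A' ω₁ ω₂ = A ω₁ ω₂) ∧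
      (∀ ω₁ ω₂, A ω₁ ω₂ = omegaLimitFam θ₁ θ₂ Φ K ω₁ ω₂) ∧
      (∀ ω₁ ω₂, A ω₁ ω₂ = ⋃ B ∈ 𝒟, omegaLimitFam θ₁ θ₂ Φ B ω₁ ω₂) :=
  pullback_attractor_existence_uniqueness_general θ₁ θ₂ P Φ 𝒟 hθ₁ hθ₂ hΦ h𝒟 hac K hK𝒟 hKcl hKm hKabs

end RDS
end

section
/- Suppose 𝒟 is neighborhood closed and Φ has a 𝒟-pullback attractor A ∈ 𝒟. Then Φ is 𝒟-pullback asymptotically compact in X and Φ has a closed measurable (with respect to the P-completion of F₂) 𝒟-pullback absorbing set K ∈ 𝒟. -/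
open Set Metric MeasureTheory Filter Topology

/-!
Pullback images of a set in `𝒟` eventually lie in every `ε`-neighbourhood of the compact set
`A(ω)`, so they shadow a sequence in `A(ω)`, which has a convergent subsequence. For the absorbing
set take `K = closure (N_δ(A))` with `δ = ε / 2`, where `ε` is what neighbourhood closedness
provides for `A`: then `K ⊆ N_ε(A)`, so `K ∈ 𝒟`; `K` absorbs because `A` attracts; and `d(x, K(ω))` is an
infimum of `d(x, u)` over the points `u` of a countable dense set with `d(u, A(ω)) < δ`, hence
measurable in `ω`.
-/

theorem IsCompact.tendsto_subseq_of_eventually_mem_thickening {X : Type*} [PseudoMetricSpace X]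
    {K : Set X} (hK : IsCompact K) {y : ℕ → X}
    (hy : ∀ ε > (0 : ℝ), ∀ᶠ n in atTop, y n ∈ thickening ε K) :
    ∃ z ∈ K, ∃ φ : ℕ → ℕ, StrictMono φ ∧ Tendsto (y ∘ φ) atTop (𝓝 z) := by
  obtain ⟨n, hn⟩ := (hy 1 one_pos).exists
  have hne : K.Nonempty := (thickening_nonempty_iff.1 ⟨y n, hn⟩).2
  choose a haK had using fun n => hK.exists_infDist_eq_dist hne (y n)
  have hdist : Tendsto (fun n => dist (a n) (y n)) atTop (𝓝 0) := by
    refine tendsto_order.2 ⟨fun b hb => .of_forall fun n => hb.trans_le dist_nonneg,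
      fun ε hε => (hy ε hε).mono fun n hn => ?_⟩
    rw [dist_comm, ← had n]
    exact (mem_thickening_iff_infDist_lt hne).1 hn
  obtain ⟨z, hz, φ, hφ, ha⟩ := hK.tendsto_subseq haK
  exact ⟨z, hz, φ, hφ, ha.congr_dist (hdist.comp hφ.tendsto_atTop)⟩

theorem IsOpen.infEDist_eq_iInf_denseRange {X ι : Type*} [PseudoEMetricSpace X] {U : Set X}
    (hU : IsOpen U) {u : ι → X} (hu : DenseRange u) (x : X) :
    infEDist x U = ⨅ (i) (_ : u i ∈ U), edist x (u i) := by
  refine le_antisymm (le_iInf₂ fun i hi => infEDist_le_edist_of_mem hi) ?_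
  calc ⨅ (i) (_ : u i ∈ U), edist x (u i)
      ≤ infEDist x (U ∩ range u) := by
        refine le_infEDist.2 ?_
        rintro _ ⟨hy, i, rfl⟩
        exact iInf₂_le i hy
    _ = infEDist x (closure (U ∩ range u)) := infEDist_closure.symm
    _ ≤ infEDist x U := infEDist_anti (hu.open_subset_closure_inter hU)

theorem measurable_infEDist_of_isOpen {X Ω : Type*} [PseudoEMetricSpace X]
    [TopologicalSpace.SeparableSpace X] [MeasurableSpace Ω] {U : Ω → Set X}
    (hU : ∀ ω, IsOpen (U ω)) (hmem : ∀ y, MeasurableSet {ω | y ∈ U ω}) (x : X) :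
    Measurable fun ω => infEDist x (U ω) := by
  have : Nonempty X := ⟨x⟩
  obtain ⟨u, hu⟩ := TopologicalSpace.exists_dense_seq X
  classical
  simp_rw [fun ω => (hU ω).infEDist_eq_iInf_denseRange hu x, iInf_eq_if]
  exact .iInf fun n => .ite (hmem (u n)) measurable_const measurable_const

section CocycleAttractor

variable {X : Type*} [MetricSpace X] {Ω₁ Ω₂ : Type*}

theorem MeasurableFam.closure_thickening [TopologicalSpace.SeparableSpace X] [MeasurableSpace Ω₂]
    {P : Measure Ω₂} {A : Ω₁ → Ω₂ → Set X} (hA : MeasurableFam P A) (hne : ∀ ω₁ ω₂, (A ω₁ ω₂).Nonempty)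
    (δ : ℝ) : MeasurableFam P fun ω₁ ω₂ => closure (thickening δ (A ω₁ ω₂)) := by
  intro x ω₁
  simp only [infDist_closure]
  refine Measurable.ennreal_toReal (measurable_infEDist_of_isOpen (Ω := NullMeasurableSpace Ω₂ P)
    (fun _ => isOpen_thickening) (fun y => ?_) x)
  have hset : {ω₂ | infDist y (A ω₁ ω₂) < δ} = {ω₂ | y ∈ thickening δ (A ω₁ ω₂)} :=
    ext fun ω₂ => (mem_thickening_iff_infDist_lt (hne ω₁ ω₂)).symm
  exact hset ▸ hA y ω₁ measurableSet_Iio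

theorem NbhdClosed.exists_closure_thickening_mem {𝒟 : Set (Ω₁ → Ω₂ → Set X)}
    (h𝒟 : NbhdClosed 𝒟) {A : Ω₁ → Ω₂ → Set X} (hA : A ∈ 𝒟)
    (hne : ∀ ω₁ ω₂, (A ω₁ ω₂).Nonempty) :
    ∃ δ > (0 : ℝ), (fun ω₁ ω₂ => closure (thickening δ (A ω₁ ω₂))) ∈ 𝒟 := by
  obtain ⟨ε, hε, hnbhd⟩ := h𝒟 A hA
  refine ⟨ε / 2, half_pos hε, hnbhd _ fun ω₁ ω₂ => ⟨?_, ?_⟩⟩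
  · exact (thickening_nonempty_iff.2 ⟨half_pos hε, hne ω₁ ω₂⟩).closure
  · exact (closure_thickening_subset_cthickening _ _).trans
      (cthickening_subset_thickening' hε (half_lt_self hε) _)

variable {θ₁ : ℝ → Ω₁ → Ω₁} {θ₂ : ℝ → Ω₂ → Ω₂} {Φ : ℝ → Ω₁ → Ω₂ → X → X}
  {𝒟 : Set (Ω₁ → Ω₂ → Set X)} {A : Ω₁ → Ω₂ → Set X}

theorem AttractsFam.asympCompact (hatt : AttractsFam θ₁ θ₂ Φ 𝒟 A)
    (hA : ∀ ω₁ ω₂, IsCompact (A ω₁ ω₂)) : AsympCompact θ₁ θ₂ Φ 𝒟 := by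
  intro ω₁ ω₂ B hB t x ht hx
  obtain ⟨z, -, φ, hφ, hz⟩ := (hA ω₁ ω₂).tendsto_subseq_of_eventually_mem_thickening
    (y := fun n => Φ (t n) (θ₁ (-(t n)) ω₁) (θ₂ (-(t n)) ω₂) (x n)) fun ε hε => by
      obtain ⟨T, hT⟩ := hatt ω₁ ω₂ B hB ε hε
      exact (ht.eventually_ge_atTop T).mono fun n hn => hT _ hn (mem_image_of_mem _ (hx n))
  exact ⟨φ, z, hφ, hz⟩

theorem AttractsFam.absorbsFam_closure_thickening (hatt : AttractsFam θ₁ θ₂ Φ 𝒟 A) {δ : ℝ}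
    (hδ : 0 < δ) : AbsorbsFam θ₁ θ₂ Φ 𝒟 fun ω₁ ω₂ => closure (thickening δ (A ω₁ ω₂)) := by
  intro ω₁ ω₂ B hB
  obtain ⟨T, hT⟩ := hatt ω₁ ω₂ B hB δ hδ
  exact ⟨max T 1, one_pos.trans_le (le_max_right _ _),
    fun t ht => (hT t ((le_max_left _ _).trans ht)).trans subset_closure⟩

end CocycleAttractor

section RDS

variable {X : Type*} [MetricSpace X] [MeasurableSpace X] [BorelSpace X]
variable {Ω₁ : Type*} {Ω₂ : Type*} [MeasurableSpace Ω₂]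

theorem pullback_attractor_necessary_conditions_general
    [TopologicalSpace.SeparableSpace X]
    (θ₁ : ℝ → Ω₁ → Ω₁) (θ₂ : ℝ → Ω₂ → Ω₂)
    (P : Measure Ω₂)
    (Φ : ℝ → Ω₁ → Ω₂ → X → X)
    (𝒟 : Set (Ω₁ → Ω₂ → Set X))
    (h𝒟ne : ∀ D ∈ 𝒟, ∀ ω₁ ω₂, (D ω₁ ω₂).Nonempty)
    (h𝒟 : NbhdClosed 𝒟)
    (A : Ω₁ → Ω₂ → Set X)
    (hA : IsPullbackAttractor P θ₁ θ₂ Φ 𝒟 A) :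
    AsympCompact θ₁ θ₂ Φ 𝒟 ∧
      ∃ K : Ω₁ → Ω₂ → Set X, K ∈ 𝒟 ∧
        (∀ ω₁ ω₂, (K ω₁ ω₂).Nonempty ∧ IsClosed (K ω₁ ω₂)) ∧
        MeasurableFam P K ∧
        AbsorbsFam θ₁ θ₂ Φ 𝒟 K := by
  obtain ⟨hA𝒟, hAmeas, hAcpt, -, hatt⟩ := hA
  have hAne := h𝒟ne A hA𝒟
  obtain ⟨δ, hδ, hK𝒟⟩ := h𝒟.exists_closure_thickening_mem hA𝒟 hAne
  refine ⟨hatt.asympCompact hAcpt, _, hK𝒟, fun ω₁ ω₂ => ⟨?_, isClosed_closure⟩,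
    hAmeas.closure_thickening hAne δ, hatt.absorbsFam_closure_thickening hδ⟩
  exact (thickening_nonempty_iff.2 ⟨hδ, hAne ω₁ ω₂⟩).closure

/-- Proposition 2.1, necessity part. If `𝒟` is neighborhood closed and `Φ` has
a `𝒟`-pullback attractor `A ∈ 𝒟`, then `Φ` is `𝒟`-pullback asymptotically compact and has a
closed measurable `𝒟`-pullback absorbing set `K ∈ 𝒟`. -/
theorem pullback_attractor_necessary_conditions
    [CompleteSpace X] [TopologicalSpace.SeparableSpace X] [Nonempty Ω₁]
    (θ₁ : ℝ → Ω₁ → Ω₁) (θ₂ : ℝ → Ω₂ → Ω₂)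
    (P : Measure Ω₂) [IsProbabilityMeasure P]
    (Φ : ℝ → Ω₁ → Ω₂ → X → X)
    (𝒟 : Set (Ω₁ → Ω₂ → Set X))
    (hθ₁ : IsParamDS₁ θ₁) (hθ₂ : IsParamDS₂ P θ₂)
    (hΦ : IsCocycle θ₁ θ₂ Φ)
    (h𝒟ne : ∀ D ∈ 𝒟, ∀ ω₁ ω₂, (D ω₁ ω₂).Nonempty)
    (h𝒟 : NbhdClosed 𝒟)
    (A : Ω₁ → Ω₂ → Set X)
    (hA : IsPullbackAttractor P θ₁ θ₂ Φ 𝒟 A) :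
    AsympCompact θ₁ θ₂ Φ 𝒟 ∧
      ∃ K : Ω₁ → Ω₂ → Set X, K ∈ 𝒟 ∧
        (∀ ω₁ ω₂, (K ω₁ ω₂).Nonempty ∧ IsClosed (K ω₁ ω₂)) ∧
        MeasurableFam P K ∧
        AbsorbsFam θ₁ θ₂ Φ 𝒟 K :=
  pullback_attractor_necessary_conditions_general θ₁ θ₂ P Φ 𝒟 h𝒟ne h𝒟 A hA

end RDS
end

section
/- Suppose 𝒟 is neighborhood closed and Φ has a 𝒟-pullback attractor A ∈ 𝒟. Then for every ω₁ ∈ Ω₁ and ω₂ ∈ Ω₂, the attractor is characterized by complete orbits: A(ω₁,ω₂) = { ψ(0,ω₁,ω₂) : ψ is a 𝒟-complete orbit of Φ }. -/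
open Set Metric MeasureTheory Filter Topology

section RDS

variable {X : Type*} [MetricSpace X] [MeasurableSpace X] [BorelSpace X]
variable {Ω₁ : Type*} {Ω₂ : Type*} [MeasurableSpace Ω₂]

section Orbits

variable {X : Type*} [MetricSpace X] [MeasurableSpace X] [BorelSpace X]
variable {Ω₁ : Type*} {Ω₂ : Type*} [MeasurableSpace Ω₂]

/-- `ψ` is a complete orbit of `Φ`. -/
def IsCompleteOrbit (θ₁ : ℝ → Ω₁ → Ω₁) (θ₂ : ℝ → Ω₂ → Ω₂)
    (Φ : ℝ → Ω₁ → Ω₂ → X → X) (ψ : ℝ → Ω₁ → Ω₂ → X) : Prop :=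
  ∀ (τ : ℝ) (t : ℝ), 0 ≤ t → ∀ ω₁ ω₂,
    Φ t (θ₁ τ ω₁) (θ₂ τ ω₂) (ψ τ ω₁ ω₂) = ψ (t + τ) ω₁ ω₂

/-- `ψ` is a `𝒟`-complete orbit of `Φ`. -/
def IsDCompleteOrbit (θ₁ : ℝ → Ω₁ → Ω₁) (θ₂ : ℝ → Ω₂ → Ω₂)
    (Φ : ℝ → Ω₁ → Ω₂ → X → X) (𝒟 : Set (Ω₁ → Ω₂ → Set X)) (ψ : ℝ → Ω₁ → Ω₂ → X) : Prop :=
  IsCompleteOrbit θ₁ θ₂ Φ ψ ∧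
    ∃ D ∈ 𝒟, ∀ (t : ℝ) (ω₁ : Ω₁) (ω₂ : Ω₂), ψ t ω₁ ω₂ ∈ D (θ₁ t ω₁) (θ₂ t ω₂)

/-- Auxiliary: through every point of an invariant family there passes a complete
orbit staying in the family. -/
lemma exists_orbit_through {X : Type*} {Ω₁ : Type*} {Ω₂ : Type*}
    (θ₁ : ℝ → Ω₁ → Ω₁) (θ₂ : ℝ → Ω₂ → Ω₂) (Φ : ℝ → Ω₁ → Ω₂ → X → X)
    (A : Ω₁ → Ω₂ → Set X)
    (hθ₁0 : θ₁ 0 = id) (hθ₂0 : θ₂ 0 = id)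
    (hθ₁add : ∀ s t : ℝ, θ₁ (s + t) = θ₁ t ∘ θ₁ s)
    (hθ₂add : ∀ s t : ℝ, θ₂ (s + t) = θ₂ t ∘ θ₂ s)
    (hΦ0 : ∀ ω₁ ω₂, Φ 0 ω₁ ω₂ = id)
    (hΦcoc : ∀ t τ : ℝ, 0 ≤ t → 0 ≤ τ → ∀ ω₁ ω₂,
      Φ (t + τ) ω₁ ω₂ = (Φ t (θ₁ τ ω₁) (θ₂ τ ω₂)) ∘ (Φ τ ω₁ ω₂))
    (hAinv : ∀ t : ℝ, 0 ≤ t → ∀ ω₁ ω₂, Φ t ω₁ ω₂ '' A ω₁ ω₂ = A (θ₁ t ω₁) (θ₂ t ω₂))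
    (ω₁' : Ω₁) (ω₂' : Ω₂) (a : X) (ha : a ∈ A ω₁' ω₂') :
    ∃ ψ : ℝ → X, ψ 0 = a ∧
      (∀ τ t : ℝ, 0 ≤ t → Φ t (θ₁ τ ω₁') (θ₂ τ ω₂') (ψ τ) = ψ (t + τ)) ∧
      (∀ t : ℝ, ψ t ∈ A (θ₁ t ω₁') (θ₂ t ω₂')) := by
  classical
  have hθ₁c : ∀ (s t : ℝ) (ω : Ω₁), θ₁ t (θ₁ s ω) = θ₁ (s + t) ω := fun s t ω =>
    (congrFun (hθ₁add s t) ω).symm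
  have hθ₂c : ∀ (s t : ℝ) (ω : Ω₂), θ₂ t (θ₂ s ω) = θ₂ (s + t) ω := fun s t ω =>
    (congrFun (hθ₂add s t) ω).symm
  -- backwards surjectivity step
  have hsur : ∀ (n : ℕ) (z : X), z ∈ A (θ₁ (-(n : ℝ)) ω₁') (θ₂ (-(n : ℝ)) ω₂') →
      ∃ w, w ∈ A (θ₁ (-(n : ℝ) - 1) ω₁') (θ₂ (-(n : ℝ) - 1) ω₂') ∧
        Φ 1 (θ₁ (-(n : ℝ) - 1) ω₁') (θ₂ (-(n : ℝ) - 1) ω₂') w = z := by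
    intro n z hz
    have hinv := hAinv 1 zero_le_one (θ₁ (-(n : ℝ) - 1) ω₁') (θ₂ (-(n : ℝ) - 1) ω₂')
    rw [hθ₁c, hθ₂c] at hinv
    have he : (-(n : ℝ) - 1 + 1) = -(n : ℝ) := by ring
    rw [he] at hinv
    have hz' : z ∈ Φ 1 (θ₁ (-(n : ℝ) - 1) ω₁') (θ₂ (-(n : ℝ) - 1) ω₂') ''
        A (θ₁ (-(n : ℝ) - 1) ω₁') (θ₂ (-(n : ℝ) - 1) ω₂') := hinv ▸ hz
    obtain ⟨w, hw, hwz⟩ := hz'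
    exact ⟨w, hw, hwz⟩
  -- the backwards sequence
  let step : ℕ → X → X := fun n z =>
    if h : z ∈ A (θ₁ (-(n : ℝ)) ω₁') (θ₂ (-(n : ℝ)) ω₂') then (hsur n z h).choose else z
  let y : ℕ → X := fun n => Nat.rec a step n
  have hy0 : y 0 = a := rfl
  have hcast : ∀ n : ℕ, (-((n + 1 : ℕ) : ℝ)) = -(n : ℝ) - 1 := by
    intro n; push_cast; ring
  have hstepeq : ∀ (n : ℕ) (h : y n ∈ A (θ₁ (-(n : ℝ)) ω₁') (θ₂ (-(n : ℝ)) ω₂')),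
      y (n + 1) = (hsur n (y n) h).choose := by
    intro n h
    exact dif_pos h
  have hymem : ∀ n : ℕ, y n ∈ A (θ₁ (-(n : ℝ)) ω₁') (θ₂ (-(n : ℝ)) ω₂') := by
    intro n
    induction n with
    | zero => simpa [hy0, hθ₁0, hθ₂0] using ha
    | succ n ih =>
        rw [hstepeq n ih, hcast n]
        exact (hsur n (y n) ih).choose_spec.1
  have hystep : ∀ n : ℕ,
      Φ 1 (θ₁ (-(n : ℝ) - 1) ω₁') (θ₂ (-(n : ℝ) - 1) ω₂') (y (n + 1)) = y n := by
    intro n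
    rw [hstepeq n (hymem n)]
    exact (hsur n (y n) (hymem n)).choose_spec.2
  -- well-definedness along increments
  have hwd : ∀ (t : ℝ) (m k : ℕ), 0 ≤ t + m →
      Φ (t + ((m + k : ℕ) : ℝ)) (θ₁ (-((m + k : ℕ) : ℝ)) ω₁') (θ₂ (-((m + k : ℕ) : ℝ)) ω₂')
        (y (m + k)) =
      Φ (t + m) (θ₁ (-(m : ℝ)) ω₁') (θ₂ (-(m : ℝ)) ω₂') (y m) := by
    intro t m k hm
    induction k with
    | zero => norm_num
    | succ k ih =>
        have h2 : (0 : ℝ) ≤ t + ((m + k : ℕ) : ℝ) := by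
          have : (m : ℝ) ≤ ((m + k : ℕ) : ℝ) := by exact_mod_cast Nat.le_add_right m k
          linarith
        have h1 : t + ((m + (k + 1) : ℕ) : ℝ) = (t + ((m + k : ℕ) : ℝ)) + 1 := by
          push_cast; ring
        have hcoc := hΦcoc (t + ((m + k : ℕ) : ℝ)) 1 h2 zero_le_one
          (θ₁ (-((m + (k + 1) : ℕ) : ℝ)) ω₁') (θ₂ (-((m + (k + 1) : ℕ) : ℝ)) ω₂')
        rw [h1, hcoc]
        have heq1 : θ₁ 1 (θ₁ (-((m + (k + 1) : ℕ) : ℝ)) ω₁') = θ₁ (-((m + k : ℕ) : ℝ)) ω₁' := by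
          rw [hθ₁c]; congr 1; push_cast; ring
        have heq2 : θ₂ 1 (θ₂ (-((m + (k + 1) : ℕ) : ℝ)) ω₂') = θ₂ (-((m + k : ℕ) : ℝ)) ω₂' := by
          rw [hθ₂c]; congr 1; push_cast; ring
        have hc2 : (-((m + (k + 1) : ℕ) : ℝ)) = -((m + k : ℕ) : ℝ) - 1 := by push_cast; ring
        have hΦ1 : Φ 1 (θ₁ (-((m + (k + 1) : ℕ) : ℝ)) ω₁') (θ₂ (-((m + (k + 1) : ℕ) : ℝ)) ω₂')
            (y (m + (k + 1))) = y (m + k) := by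
          rw [hc2]
          exact hystep (m + k)
        simp only [Function.comp_apply]
        rw [hΦ1, heq1, heq2]
        exact ih
  -- the orbit
  set N : ℝ → ℕ := fun t => ⌈-t⌉₊ with hN
  have hNle : ∀ t : ℝ, 0 ≤ t + N t := by
    intro t
    have h := Nat.le_ceil (-t)
    simp only [hN]
    linarith
  set ψ : ℝ → X := fun t =>
    Φ (t + N t) (θ₁ (-(N t : ℝ)) ω₁') (θ₂ (-(N t : ℝ)) ω₂') (y (N t)) with hψdef
  have hψt : ∀ t : ℝ, ψ t = Φ (t + N t) (θ₁ (-(N t : ℝ)) ω₁') (θ₂ (-(N t : ℝ)) ω₂') (y (N t)) :=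
    fun t => rfl
  -- representation with any admissible m
  have hrep : ∀ (t : ℝ) (m : ℕ), 0 ≤ t + m →
      Φ (t + m) (θ₁ (-(m : ℝ)) ω₁') (θ₂ (-(m : ℝ)) ω₂') (y m) = ψ t := by
    have key : ∀ (t : ℝ) (m n : ℕ), m ≤ n → 0 ≤ t + m →
        Φ (t + n) (θ₁ (-(n : ℝ)) ω₁') (θ₂ (-(n : ℝ)) ω₂') (y n) =
        Φ (t + m) (θ₁ (-(m : ℝ)) ω₁') (θ₂ (-(m : ℝ)) ω₂') (y m) := by
      intro t m n hmn hm
      have h := hwd t m (n - m) hm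
      rw [Nat.add_sub_cancel' hmn] at h
      exact h
    intro t m hm
    rw [hψt t]
    rcases le_total m (N t) with h | h
    · exact (key t m (N t) h hm).symm
    · exact key t (N t) m h (hNle t)
  refine ⟨ψ, ?_, ?_, ?_⟩
  · -- ψ 0 = a
    have h0 : N 0 = 0 := by simp [hN]
    rw [hψt 0, h0]
    norm_num [hΦ0, hθ₁0, hθ₂0]
    exact hy0
  · -- orbit property
    intro τ t ht
    have hm := hNle τ
    have hcoc := hΦcoc t (τ + N τ) ht hm (θ₁ (-(N τ : ℝ)) ω₁') (θ₂ (-(N τ : ℝ)) ω₂')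
    have heq1 : θ₁ (τ + N τ) (θ₁ (-(N τ : ℝ)) ω₁') = θ₁ τ ω₁' := by
      rw [hθ₁c]; congr 1; ring
    have heq2 : θ₂ (τ + N τ) (θ₂ (-(N τ : ℝ)) ω₂') = θ₂ τ ω₂' := by
      rw [hθ₂c]; congr 1; ring
    have hstep1 : Φ t (θ₁ τ ω₁') (θ₂ τ ω₂') (ψ τ) =
        Φ (t + (τ + N τ)) (θ₁ (-(N τ : ℝ)) ω₁') (θ₂ (-(N τ : ℝ)) ω₂') (y (N τ)) := by
      rw [hψt τ, hcoc]
      simp only [Function.comp_apply, heq1, heq2]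
    rw [hstep1, show t + (τ + (N τ : ℝ)) = (t + τ) + (N τ : ℝ) by ring]
    exact hrep (t + τ) (N τ) (by linarith)
  · -- membership
    intro t
    have hm := hNle t
    have hinv := hAinv (t + N t) hm (θ₁ (-(N t : ℝ)) ω₁') (θ₂ (-(N t : ℝ)) ω₂')
    rw [hθ₁c, hθ₂c, show (-(N t : ℝ) + (t + N t)) = t by ring] at hinv
    rw [hψt t]
    exact hinv ▸ mem_image_of_mem _ (hymem (N t))

/-- Proposition 2.1, characterization of the attractor by `𝒟`-complete orbits.
If `𝒟` is neighborhood closed and `Φ` has a `𝒟`-pullback attractor `A ∈ 𝒟`, then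
`A(ω₁,ω₂) = { ψ(0,ω₁,ω₂) : ψ is a 𝒟-complete orbit of Φ }`. -/
theorem pullback_attractor_complete_orbits
    [CompleteSpace X] [TopologicalSpace.SeparableSpace X] [Nonempty Ω₁]
    (θ₁ : ℝ → Ω₁ → Ω₁) (θ₂ : ℝ → Ω₂ → Ω₂)
    (P : Measure Ω₂) [IsProbabilityMeasure P]
    (Φ : ℝ → Ω₁ → Ω₂ → X → X)
    (𝒟 : Set (Ω₁ → Ω₂ → Set X))
    (hθ₁ : IsParamDS₁ θ₁) (hθ₂ : IsParamDS₂ P θ₂)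
    (hΦ : IsCocycle θ₁ θ₂ Φ)
    (h𝒟ne : ∀ D ∈ 𝒟, ∀ ω₁ ω₂, (D ω₁ ω₂).Nonempty)
    (h𝒟 : NbhdClosed 𝒟)
    (A : Ω₁ → Ω₂ → Set X)
    (hA : IsPullbackAttractor P θ₁ θ₂ Φ 𝒟 A) :
    ∀ ω₁ ω₂, A ω₁ ω₂ =
      { x : X | ∃ ψ : ℝ → Ω₁ → Ω₂ → X,
          IsDCompleteOrbit θ₁ θ₂ Φ 𝒟 ψ ∧ ψ 0 ω₁ ω₂ = x } := by
  classical
  obtain ⟨hA𝒟, hAmeas, hAcomp, hAinv, hAattr⟩ := hA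
  obtain ⟨hθ₁0, hθ₁add⟩ := hθ₁
  obtain ⟨-, hθ₂0, hθ₂add, -⟩ := hθ₂
  obtain ⟨-, hΦ0, hΦcoc, -⟩ := hΦ
  intro ω₁ ω₂
  ext x
  constructor
  · -- forward inclusion: construct a 𝒟-complete orbit through x
    intro hx
    -- starting point family
    set pt : Ω₁ → Ω₂ → X := fun ω₁' ω₂' =>
      if ω₁' = ω₁ ∧ ω₂' = ω₂ then x else (h𝒟ne A hA𝒟 ω₁' ω₂').choose with hptdef
    have hpt : ∀ ω₁' ω₂', pt ω₁' ω₂' ∈ A ω₁' ω₂' := by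
      intro ω₁' ω₂'
      simp only [hptdef]
      by_cases h : ω₁' = ω₁ ∧ ω₂' = ω₂
      · rw [if_pos h, h.1, h.2]; exact hx
      · rw [if_neg h]; exact (h𝒟ne A hA𝒟 ω₁' ω₂').choose_spec
    have hptx : pt ω₁ ω₂ = x := by simp only [hptdef]; simp
    have hkey := fun ω₁' ω₂' =>
      exists_orbit_through θ₁ θ₂ Φ A hθ₁0 hθ₂0 hθ₁add hθ₂add hΦ0 hΦcoc hAinv ω₁' ω₂'
        (pt ω₁' ω₂') (hpt ω₁' ω₂')
    set ψ : ℝ → Ω₁ → Ω₂ → X := fun t ω₁' ω₂' => (hkey ω₁' ω₂').choose t with hψdef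
    have hspec := fun ω₁' ω₂' => (hkey ω₁' ω₂').choose_spec
    refine ⟨ψ, ⟨?_, A, hA𝒟, ?_⟩, ?_⟩
    · intro τ t ht ω₁' ω₂'
      exact (hspec ω₁' ω₂').2.1 τ t ht
    · intro t ω₁' ω₂'
      exact (hspec ω₁' ω₂').2.2 t
    · simp only [hψdef]
      rw [(hspec ω₁ ω₂).1, hptx]
  · -- reverse inclusion
    rintro ⟨ψ, ⟨horb, D, hD𝒟, hDmem⟩, hψ0⟩
    have hAne : (A ω₁ ω₂).Nonempty := h𝒟ne A hA𝒟 ω₁ ω₂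
    have hthick : ∀ ε > (0 : ℝ), x ∈ thickening ε (A ω₁ ω₂) := by
      intro ε hε
      obtain ⟨T, hT⟩ := hAattr ω₁ ω₂ D hD𝒟 ε hε
      set t := max T 0 with htdef
      have ht : t ≥ T := le_max_left _ _
      have h0t : (0 : ℝ) ≤ t := le_max_right _ _
      apply hT t ht
      refine ⟨ψ (-t) ω₁ ω₂, hDmem (-t) ω₁ ω₂, ?_⟩
      have := horb (-t) t h0t ω₁ ω₂
      rw [this, show t + -t = (0:ℝ) by ring, hψ0]
    rw [← IsClosed.closure_eq (hAcomp ω₁ ω₂).isClosed, Metric.mem_closure_iff]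
    intro ε hε
    obtain ⟨y, hy, hdy⟩ := Metric.mem_thickening_iff.mp (hthick ε hε)
    exact ⟨y, hy, hdy⟩

end Orbits

end RDS
end

section
/- Suppose conditions (C1)–(C4) hold: (C1) for every t ≥ 0, ω₁ ∈ Ω₁, ω₂ ∈ Ω₂, every sequence λ_n → λ₀ in Λ and every sequence x_n → x in X, one has Φ_{λ_n}(t, ω₁, ω₂, x_n) → Φ_{λ₀}(t, ω₁, ω₂, x); (C2) there exists R_{λ₀} : Ω₁ × Ω₂ → ℝ such that the family of closed balls B(ω₁,ω₂) = { x ∈ X : ‖x‖ ≤ R_{λ₀}(ω₁,ω₂) } belongs to 𝒟_{λ₀}; (C3) for all ω₁, ω₂, limsup_{λ→λ₀} ‖K_λ(ω₁,ω₂)‖ ≤ R_{λ₀}(ω₁,ω₂), where ‖S‖ = sup_{x∈S} ‖x‖; (C4) for all ω₁, ω₂, the union ∪_{λ∈Λ} A_λ(ω₁,ω₂) is precompact in X. Then for every ω₁ ∈ Ω₁ and ω₂ ∈ Ω₂, dist(A_λ(ω₁,ω₂), A_{λ₀}(ω₁,ω₂)) → 0 as λ → λ₀, where dist(E,F) = sup_{a∈E}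 inf_{b∈F} ‖a−b‖. -/
open Set Metric MeasureTheory Filter Topology

section UpperSemicontinuity

variable {X : Type*} [NormedAddCommGroup X] [NormedSpace ℝ X] [CompleteSpace X]
  [MeasurableSpace X] [BorelSpace X]
variable {Ω₁ : Type*} {Ω₂ : Type*} [MeasurableSpace Ω₂]
variable {Λ : Type*} [MetricSpace Λ]

/-- Theorem 3.1. Under conditions (C1)–(C4), the pullback attractors
`A_λ` are upper semicontinuous at `l₀`:
`dist(A_λ(ω₁,ω₂), A_{l₀}(ω₁,ω₂)) → 0` as `λ → l₀`. -/
theorem upper_semicontinuity_of_pullback_attractors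
    [Nonempty Ω₁]
    (θ₁ : ℝ → Ω₁ → Ω₁) (θ₂ : ℝ → Ω₂ → Ω₂)
    (P : Measure Ω₂) [IsProbabilityMeasure P]
    (hθ₁ : IsParamDS₁ θ₁) (hθ₂ : IsParamDS₂ P θ₂)
    (Φ : Λ → ℝ → Ω₁ → Ω₂ → X → X) (l₀ : Λ)
    (𝒟 : Λ → Set (Ω₁ → Ω₂ → Set X))
    (A K : Λ → Ω₁ → Ω₂ → Set X)
    (hΦ : ∀ l : Λ, IsCocycle θ₁ θ₂ (Φ l))
    (h𝒟ne : ∀ l : Λ, ∀ D ∈ 𝒟 l, ∀ ω₁ ω₂, (D ω₁ ω₂).Nonempty)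
    -- `A l` is a `𝒟 l`-pullback attractor of `Φ l`
    (hA𝒟 : ∀ l : Λ, A l ∈ 𝒟 l)
    (hAcp : ∀ l : Λ, ∀ ω₁ ω₂, IsCompact (A l ω₁ ω₂))
    (hAinv : ∀ l : Λ, ∀ t : ℝ, 0 ≤ t → ∀ ω₁ ω₂,
        Φ l t ω₁ ω₂ '' A l ω₁ ω₂ = A l (θ₁ t ω₁) (θ₂ t ω₂))
    (hAatt : ∀ l : Λ, AttractsFam θ₁ θ₂ (Φ l) (𝒟 l) (A l))
    -- `K l` is a `𝒟 l`-pullback absorbing set of `Φ l`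
    (hK𝒟 : ∀ l : Λ, K l ∈ 𝒟 l)
    (hKabs : ∀ l : Λ, AbsorbsFam θ₁ θ₂ (Φ l) (𝒟 l) (K l))
    (R : Ω₁ → Ω₂ → ℝ)
    -- (C1): convergence of the cocycles
    (hC1 : ∀ t : ℝ, 0 ≤ t → ∀ ω₁ ω₂, ∀ (l : ℕ → Λ) (x : ℕ → X) (x₀ : X),
        Tendsto l atTop (𝓝 l₀) → Tendsto x atTop (𝓝 x₀) →
        Tendsto (fun n => Φ (l n) t ω₁ ω₂ (x n)) atTop (𝓝 (Φ l₀ t ω₁ ω₂ x₀)))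
    -- (C2): the family of closed balls of radii `R` belongs to `𝒟 l₀`
    (hC2 : (fun ω₁ ω₂ => {x : X | ‖x‖ ≤ R ω₁ ω₂}) ∈ 𝒟 l₀)
    -- (C3): `limsup_{λ→l₀} ‖K_λ(ω₁,ω₂)‖ ≤ R(ω₁,ω₂)`
    (hC3 : ∀ ω₁ ω₂, ∀ ε > (0:ℝ), ∀ᶠ l in 𝓝 l₀, ∀ x ∈ K l ω₁ ω₂, ‖x‖ ≤ R ω₁ ω₂ + ε)
    -- (C4): precompactness of the union of the attractors
    (hC4 : ∀ ω₁ ω₂, IsCompact (closure (⋃ l : Λ, A l ω₁ ω₂))) :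
    ∀ ω₁ ω₂, ∀ ε > (0:ℝ), ∀ᶠ l in 𝓝 l₀, A l ω₁ ω₂ ⊆ thickening ε (A l₀ ω₁ ω₂) := by
  intro ω₁ ω₂ ε hε
  by_contra hcon
  -- group identities
  have hg1 : ∀ (t : ℝ) (ω : Ω₁), θ₁ t (θ₁ (-t) ω) = ω := by
    intro t ω
    have h0 : θ₁ ((-t) + t) = θ₁ t ∘ θ₁ (-t) := hθ₁.2 (-t) t
    rw [neg_add_cancel, hθ₁.1] at h0
    exact (congrFun h0 ω).symm
  have hg2 : ∀ (t : ℝ) (ω : Ω₂), θ₂ t (θ₂ (-t) ω) = ω := by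
    intro t ω
    have h0 : θ₂ ((-t) + t) = θ₂ t ∘ θ₂ (-t) := hθ₂.2.2.1 (-t) t
    rw [neg_add_cancel, hθ₂.2.1] at h0
    exact (congrFun h0 ω).symm
  -- attractor is contained in the absorbing set
  have hAK : ∀ (l : Λ) (a : Ω₁) (b : Ω₂), A l a b ⊆ K l a b := by
    intro l a b
    obtain ⟨T, hT, hsub⟩ := hKabs l a b (A l) (hA𝒟 l)
    have h2 : pbImage θ₁ θ₂ (Φ l) (A l) T a b = A l a b := by
      rw [pbImage, hAinv l T hT.le, hg1, hg2]
    have h1 := hsub T le_rfl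
    rwa [h2] at h1
  -- extract a bad sequence
  rw [Filter.not_eventually] at hcon
  obtain ⟨lseq, hlt, hlp⟩ := Filter.exists_seq_forall_of_frequently hcon
  have hx : ∀ n, ∃ x, x ∈ A (lseq n) ω₁ ω₂ ∧ x ∉ thickening ε (A l₀ ω₁ ω₂) := by
    intro n
    have := hlp n
    rw [Set.not_subset] at this
    obtain ⟨x, hx1, hx2⟩ := this
    exact ⟨x, hx1, hx2⟩
  choose x hxA hxT using hx
  -- convergent subsequence of x
  obtain ⟨z, hzmem, φ, hφ, hxz⟩ := (hC4 ω₁ ω₂).tendsto_subseq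
    (fun n => subset_closure (mem_iUnion.2 ⟨lseq n, hxA n⟩))
  have hzout : z ∉ thickening ε (A l₀ ω₁ ω₂) := by
    have hclosed : IsClosed ((thickening ε (A l₀ ω₁ ω₂))ᶜ) :=
      isOpen_thickening.isClosed_compl
    exact hclosed.mem_of_tendsto hxz
      (Filter.Eventually.of_forall fun n => hxT (φ n))
  -- choose attraction time
  obtain ⟨T₀, hT₀⟩ := hAatt l₀ ω₁ ω₂ _ hC2 (ε/2) (half_pos hε)
  set T : ℝ := max T₀ 1 with hTdef
  have hT0 : (0:ℝ) ≤ T := le_trans zero_le_one (le_max_right _ _)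
  have hTge : T ≥ T₀ := le_max_left _ _
  set a : Ω₁ := θ₁ (-T) ω₁ with ha
  set b : Ω₂ := θ₂ (-T) ω₂ with hb
  have hinv : ∀ l : Λ, Φ l T a b '' A l a b = A l ω₁ ω₂ := by
    intro l
    rw [ha, hb, hAinv l T hT0, hg1, hg2]
  -- pull back the points
  have hy : ∀ n, ∃ y, y ∈ A (lseq (φ n)) a b ∧ Φ (lseq (φ n)) T a b y = x (φ n) := by
    intro n
    have : x (φ n) ∈ Φ (lseq (φ n)) T a b '' A (lseq (φ n)) a b := by
      rw [hinv]; exact hxA (φ n)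
    obtain ⟨y, hy1, hy2⟩ := this
    exact ⟨y, hy1, hy2⟩
  choose y hyA hyΦ using hy
  -- convergent subsubsequence of y
  obtain ⟨y₀, hy₀mem, ψ, hψ, hyy⟩ := (hC4 a b).tendsto_subseq
    (fun n => subset_closure (mem_iUnion.2 ⟨lseq (φ n), hyA n⟩))
  have hltψ : Tendsto (fun n => lseq (φ (ψ n))) atTop (𝓝 l₀) :=
    hlt.comp ((hφ.comp hψ).tendsto_atTop)
  -- (C1) gives the limit identification
  have hΦconv : Tendsto (fun n => Φ (lseq (φ (ψ n))) T a b (y (ψ n))) atTop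
      (𝓝 (Φ l₀ T a b y₀)) := hC1 T hT0 a b _ _ _ hltψ hyy
  have heq : ∀ n, Φ (lseq (φ (ψ n))) T a b (y (ψ n)) = x (φ (ψ n)) := fun n => hyΦ (ψ n)
  have hxzψ : Tendsto (fun n => x (φ (ψ n))) atTop (𝓝 z) := hxz.comp hψ.tendsto_atTop
  have hz_eq : z = Φ l₀ T a b y₀ := by
    refine tendsto_nhds_unique hxzψ ?_
    simpa only [heq] using hΦconv
  -- norm bound on y₀
  have hy₀R : ‖y₀‖ ≤ R a b := by
    refine le_of_forall_pos_le_add ?_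
    intro δ hδ
    have hev := hltψ.eventually (hC3 a b δ hδ)
    have hev2 : ∀ᶠ n in atTop, ‖(fun n => y (ψ n)) n‖ ≤ R a b + δ :=
      hev.mono fun n h => h _ (hAK _ _ _ (hyA (ψ n)))
    exact le_of_tendsto hyy.norm hev2
  -- conclude
  have hzpb : z ∈ pbImage θ₁ θ₂ (Φ l₀) (fun ω₁ ω₂ => {x : X | ‖x‖ ≤ R ω₁ ω₂}) T ω₁ ω₂ := by
    rw [hz_eq]
    exact Set.mem_image_of_mem _ hy₀R
  have hzin : z ∈ thickening (ε/2) (A l₀ ω₁ ω₂) := hT₀ T hTge hzpb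
  exact hzout (thickening_mono (half_le_self hε.le) _ hzin)

end UpperSemicontinuity
end

section
/- Suppose conditions (C1')–(C4') hold: (C1') for every t ≥ 0, ω₁ ∈ Ω₁, ω₂ ∈ Ω₂, every sequence λ_n → λ₀ in Λ and every x_n → x in X, one has Φ_{λ_n}(t, ω₁, ω₂, x_n) → Φ_{λ₀}(t, ω₁, x); (C2') there exists R̄_{λ₀} : Ω₁ → ℝ such that the family of closed balls B(ω₁) = { x ∈ X : ‖x‖ ≤ R̄_{λ₀}(ω₁) } belongs to 𝒟_{λ₀}; (C3') for all ω₁, ω₂, limsup_{λ→λ₀} ‖K_λ(ω₁,ω₂)‖ ≤ R̄_{λ₀}(ω₁), where ‖S‖ = sup_{x∈S} ‖x‖; (C4') for all ω₁, ω₂, the union of A_{λ₀}(ω₁) and all A_λ(ω₁,ω₂) for λ ∈ Λ, λ ≠ λ₀, is precompact in X. Then for every ω₁ ∈ Ω₁ and ω₂ ∈ Ω₂, dist(A_λ(ω₁,ω₂), A_{λ₀}(ω₁)) → 0 as λ → λ₀, where dist(E,F) = sup_{a∈E} inf_{b∈F} ‖a−b‖. -/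
/-!
Fix a time `t ≥ 0` after which `Φ₀` pulls the balls of radii `R` back into the `ε`-neighbourhood
of `A₀(ω₁)`. By invariance, `A_λ(ω₁, ω₂)` is the image under `Φ_λ(t)` of `A_λ` at the fibre
`(θ₁(-t)ω₁, θ₂(-t)ω₂)`, which lies in the absorbing set `K_λ` there, so by (C3') its norms are
asymptotically at most `R(θ₁(-t)ω₁)`. If points of `A_λₙ(ω₁, ω₂)` stayed outside the
neighbourhood along `λₙ → λ₀`, their preimages would by (C4') have a convergent subsequence with
limit in the ball, and by (C1') the images would converge into the open neighbourhood.
-/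

open Set Metric MeasureTheory Filter Topology

section PullbackInvariance

variable {Ω : Type*} {θ : ℝ → Ω → Ω}

theorem IsParamDS₁.apply_neg_apply_s5 (hθ : IsParamDS₁ θ) (s : ℝ) (ω : Ω) : θ s (θ (-s) ω) = ω := by
  have h := congrFun (hθ.2 (-s) s) ω
  rwa [neg_add_cancel, hθ.1, eq_comm] at h

theorem IsParamDS₂.isParamDS₁ [MeasurableSpace Ω] {P : Measure Ω} (hθ : IsParamDS₂ P θ) :
    IsParamDS₁ θ :=
  ⟨hθ.2.1, hθ.2.2.1⟩

variable {X Ω₁ Ω₂ : Type*} {θ₁ : ℝ → Ω₁ → Ω₁} {θ₂ : ℝ → Ω₂ → Ω₂}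
  {Φ : ℝ → Ω₁ → Ω₂ → X → X} {A : Ω₁ → Ω₂ → Set X}

theorem pbImage_eq_self_of_invariant (hθ₁ : IsParamDS₁ θ₁) (hθ₂ : IsParamDS₁ θ₂)
    (hA : ∀ t : ℝ, 0 ≤ t → ∀ ω₁ ω₂, Φ t ω₁ ω₂ '' A ω₁ ω₂ = A (θ₁ t ω₁) (θ₂ t ω₂))
    {t : ℝ} (ht : 0 ≤ t) (ω₁ : Ω₁) (ω₂ : Ω₂) : pbImage θ₁ θ₂ Φ A t ω₁ ω₂ = A ω₁ ω₂ := by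
  rw [pbImage, hA t ht, hθ₁.apply_neg_apply_s5, hθ₂.apply_neg_apply_s5]

theorem subset_of_absorbsFam {𝒟 : Set (Ω₁ → Ω₂ → Set X)} {K : Ω₁ → Ω₂ → Set X}
    (hθ₁ : IsParamDS₁ θ₁) (hθ₂ : IsParamDS₁ θ₂)
    (hA : ∀ t : ℝ, 0 ≤ t → ∀ ω₁ ω₂, Φ t ω₁ ω₂ '' A ω₁ ω₂ = A (θ₁ t ω₁) (θ₂ t ω₂))
    (hA𝒟 : A ∈ 𝒟) (hK : AbsorbsFam θ₁ θ₂ Φ 𝒟 K) (ω₁ : Ω₁) (ω₂ : Ω₂) :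
    A ω₁ ω₂ ⊆ K ω₁ ω₂ := by
  obtain ⟨T, hT, hTK⟩ := hK ω₁ ω₂ A hA𝒟
  simpa only [pbImage_eq_self_of_invariant hθ₁ hθ₂ hA hT.le] using hTK T le_rfl

end PullbackInvariance

section ConvergingMaps

variable {X : Type*} [SeminormedAddCommGroup X]

theorem norm_le_of_tendsto_of_forall_eventually_norm_le {ι : Type*} {F : Filter ι} [F.NeBot]
    {y : ι → X} {y₀ : X} {r : ℝ} (hy : Tendsto y F (𝓝 y₀))
    (hbound : ∀ δ > (0:ℝ), ∀ᶠ i in F, ‖y i‖ ≤ r + δ) : ‖y₀‖ ≤ r :=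
  le_of_forall_pos_le_add fun δ hδ => le_of_tendsto hy.norm (hbound δ hδ)

theorem eventually_mapsTo_of_tendsto {Λ Y : Type*} [TopologicalSpace Λ] [FirstCountableTopology Λ]
    [TopologicalSpace Y] {l₀ : Λ} {f : Λ → X → Y} {g : X → Y} {S : Λ → Set X} {C : Set X}
    {r : ℝ} {U : Set Y}
    (hfg : ∀ (l : ℕ → Λ) (x : ℕ → X) (x₀ : X), (∀ n, l n ≠ l₀) → Tendsto l atTop (𝓝 l₀) →
      Tendsto x atTop (𝓝 x₀) → Tendsto (fun n => f (l n) (x n)) atTop (𝓝 (g x₀)))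
    (hC : IsCompact C) (hSC : ∀ l, l ≠ l₀ → S l ⊆ C)
    (hbound : ∀ δ > (0:ℝ), ∀ᶠ l in 𝓝[≠] l₀, ∀ y ∈ S l, ‖y‖ ≤ r + δ)
    (hU : IsOpen U) (hgU : MapsTo g {y | ‖y‖ ≤ r} U) :
    ∀ᶠ l in 𝓝[≠] l₀, MapsTo (f l) (S l) U := by
  by_contra hcon
  obtain ⟨l, hl, hl_bad⟩ := frequently_iff_seq_forall.1
    ((not_eventually.1 hcon).and_eventually self_mem_nhdsWithin)
  choose y hyS hy_out using fun n => not_forall₂.1 (hl_bad n).1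
  obtain ⟨y₀, -, φ, hφ, hy₀⟩ := hC.tendsto_subseq fun n => hSC _ (hl_bad n).2 (hyS n)
  have hlφ : Tendsto (l ∘ φ) atTop (𝓝[≠] l₀) := hl.comp hφ.tendsto_atTop
  have hy₀_norm : ‖y₀‖ ≤ r := norm_le_of_tendsto_of_forall_eventually_norm_le hy₀
    fun δ hδ => (hlφ.eventually (hbound δ hδ)).mono fun k hk => hk _ (hyS (φ k))
  have hlim := hfg (l ∘ φ) (y ∘ φ) y₀ (fun k => (hl_bad (φ k)).2)
    (tendsto_nhds_of_tendsto_nhdsWithin hlφ) hy₀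
  obtain ⟨k, hk⟩ := (hlim.eventually_mem (hU.mem_nhds (hgU hy₀_norm))).exists
  exact hy_out (φ k) hk

end ConvergingMaps

section UpperSemicontinuityDet

variable {X : Type*} [NormedAddCommGroup X] [NormedSpace ℝ X] [CompleteSpace X]
  [MeasurableSpace X] [BorelSpace X]
variable {Ω₁ : Type*} {Ω₂ : Type*} [MeasurableSpace Ω₂]
variable {Λ : Type*} [MetricSpace Λ]

theorem upper_semicontinuity_to_deterministic_nonautonomous_general
    (θ₁ : ℝ → Ω₁ → Ω₁) (θ₂ : ℝ → Ω₂ → Ω₂)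
    (P : Measure Ω₂)
    (hθ₁ : IsParamDS₁ θ₁) (hθ₂ : IsParamDS₂ P θ₂)
    (Φ : Λ → ℝ → Ω₁ → Ω₂ → X → X) (l₀ : Λ)
    (𝒟 : Λ → Set (Ω₁ → Ω₂ → Set X))
    (A K : Λ → Ω₁ → Ω₂ → Set X)
    -- the random cocycles, attractors and absorbing sets, for `l ≠ l₀`
    (hA𝒟 : ∀ l : Λ, l ≠ l₀ → A l ∈ 𝒟 l)
    (hAinv : ∀ l : Λ, l ≠ l₀ → ∀ t : ℝ, 0 ≤ t → ∀ ω₁ ω₂,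
        Φ l t ω₁ ω₂ '' A l ω₁ ω₂ = A l (θ₁ t ω₁) (θ₂ t ω₂))
    (hKabs : ∀ l : Λ, l ≠ l₀ → AbsorbsFam θ₁ θ₂ (Φ l) (𝒟 l) (K l))
    -- the limiting deterministic non-autonomous cocycle `Φ₀` and its attractor `A₀`
    (Φ₀ : ℝ → Ω₁ → X → X)
    (𝒟₀ : Set (Ω₁ → Set X))
    (A₀ : Ω₁ → Set X)
    (hA₀att : ∀ ω₁, ∀ B ∈ 𝒟₀, ∀ ε > (0:ℝ), ∃ T : ℝ, ∀ t ≥ T,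
        Φ₀ t (θ₁ (-t) ω₁) '' B (θ₁ (-t) ω₁) ⊆ thickening ε (A₀ ω₁))
    (R : Ω₁ → ℝ)
    -- (C1'): convergence of the cocycles towards `Φ₀`
    (hC1 : ∀ t : ℝ, 0 ≤ t → ∀ ω₁ ω₂, ∀ (l : ℕ → Λ) (x : ℕ → X) (x₀ : X),
        (∀ n, l n ≠ l₀) → Tendsto l atTop (𝓝 l₀) → Tendsto x atTop (𝓝 x₀) →
        Tendsto (fun n => Φ (l n) t ω₁ ω₂ (x n)) atTop (𝓝 (Φ₀ t ω₁ x₀)))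
    -- (C2'): the family of closed balls of radii `R` belongs to `𝒟₀`
    (hC2 : (fun ω₁ => {x : X | ‖x‖ ≤ R ω₁}) ∈ 𝒟₀)
    -- (C3'): `limsup_{λ→λ₀} ‖K_λ(ω₁,ω₂)‖ ≤ R(ω₁)`
    (hC3 : ∀ ω₁ ω₂, ∀ ε > (0:ℝ), ∀ᶠ l in 𝓝[≠] l₀, ∀ x ∈ K l ω₁ ω₂, ‖x‖ ≤ R ω₁ + ε)
    -- (C4'): precompactness of the union of the attractors
    (hC4 : ∀ ω₁ ω₂, IsCompact (closure (A₀ ω₁ ∪ ⋃ (l : Λ) (_ : l ≠ l₀), A l ω₁ ω₂))) :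
    ∀ ω₁ ω₂, ∀ ε > (0:ℝ), ∀ᶠ l in 𝓝[≠] l₀, A l ω₁ ω₂ ⊆ thickening ε (A₀ ω₁) := by
  intro ω₁ ω₂ ε hε
  obtain ⟨T, hT⟩ := hA₀att ω₁ _ hC2 ε hε
  set t := max T 0
  have ht : 0 ≤ t := le_max_right _ _
  set ω₁' := θ₁ (-t) ω₁
  set ω₂' := θ₂ (-t) ω₂
  have hθ₂' := hθ₂.isParamDS₁
  have hbound : ∀ δ > (0:ℝ), ∀ᶠ l in 𝓝[≠] l₀, ∀ y ∈ A l ω₁' ω₂', ‖y‖ ≤ R ω₁' + δ := by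
    intro δ hδ
    filter_upwards [hC3 ω₁' ω₂' δ hδ, self_mem_nhdsWithin] with l hl hne y hy
    exact hl y (subset_of_absorbsFam hθ₁ hθ₂' (hAinv l hne) (hA𝒟 l hne) (hKabs l hne) _ _ hy)
  have hmaps := eventually_mapsTo_of_tendsto (f := fun l => Φ l t ω₁' ω₂') (hC1 t ht ω₁' ω₂')
    (hC4 ω₁' ω₂')
    (fun l hl => subset_closure.trans' (subset_union_right.trans' (subset_biUnion_of_mem hl)))
    hbound isOpen_thickening fun y hy => hT t (le_max_left _ _) (mem_image_of_mem _ hy)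
  filter_upwards [hmaps, self_mem_nhdsWithin] with l hl hne
  rw [← pbImage_eq_self_of_invariant hθ₁ hθ₂' (hAinv l hne) ht]
  exact hl.image_subset

/-- Theorem 3.2. Upper semicontinuity of random pullback attractors
`A_λ` towards the pullback attractor `A₀` of a deterministic non-autonomous cocycle `Φ₀`
as `λ → λ₀`, under conditions (C1')–(C4'). -/
theorem upper_semicontinuity_to_deterministic_nonautonomous
    [Nonempty Ω₁]
    (θ₁ : ℝ → Ω₁ → Ω₁) (θ₂ : ℝ → Ω₂ → Ω₂)
    (P : Measure Ω₂) [IsProbabilityMeasure P]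
    (hθ₁ : IsParamDS₁ θ₁) (hθ₂ : IsParamDS₂ P θ₂)
    (Φ : Λ → ℝ → Ω₁ → Ω₂ → X → X) (l₀ : Λ)
    (𝒟 : Λ → Set (Ω₁ → Ω₂ → Set X))
    (A K : Λ → Ω₁ → Ω₂ → Set X)
    -- the random cocycles, attractors and absorbing sets, for `l ≠ l₀`
    (hΦ : ∀ l : Λ, l ≠ l₀ → IsCocycle θ₁ θ₂ (Φ l))
    (h𝒟ne : ∀ l : Λ, l ≠ l₀ → ∀ D ∈ 𝒟 l, ∀ ω₁ ω₂, (D ω₁ ω₂).Nonempty)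
    (hA𝒟 : ∀ l : Λ, l ≠ l₀ → A l ∈ 𝒟 l)
    (hAcp : ∀ l : Λ, l ≠ l₀ → ∀ ω₁ ω₂, IsCompact (A l ω₁ ω₂))
    (hAinv : ∀ l : Λ, l ≠ l₀ → ∀ t : ℝ, 0 ≤ t → ∀ ω₁ ω₂,
        Φ l t ω₁ ω₂ '' A l ω₁ ω₂ = A l (θ₁ t ω₁) (θ₂ t ω₂))
    (hAatt : ∀ l : Λ, l ≠ l₀ → AttractsFam θ₁ θ₂ (Φ l) (𝒟 l) (A l))
    (hK𝒟 : ∀ l : Λ, l ≠ l₀ → K l ∈ 𝒟 l)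
    (hKabs : ∀ l : Λ, l ≠ l₀ → AbsorbsFam θ₁ θ₂ (Φ l) (𝒟 l) (K l))
    -- the limiting deterministic non-autonomous cocycle `Φ₀` and its attractor `A₀`
    (Φ₀ : ℝ → Ω₁ → X → X)
    (𝒟₀ : Set (Ω₁ → Set X))
    (A₀ : Ω₁ → Set X)
    (hΦ₀id : ∀ ω₁, Φ₀ 0 ω₁ = id)
    (hΦ₀coc : ∀ t τ : ℝ, 0 ≤ t → 0 ≤ τ → ∀ ω₁,
        Φ₀ (t + τ) ω₁ = (Φ₀ t (θ₁ τ ω₁)) ∘ (Φ₀ τ ω₁))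
    (hΦ₀cont : ∀ t : ℝ, 0 ≤ t → ∀ ω₁, Continuous (Φ₀ t ω₁))
    (h𝒟₀ne : ∀ D ∈ 𝒟₀, ∀ ω₁, (D ω₁).Nonempty)
    (hA₀𝒟 : A₀ ∈ 𝒟₀)
    (hA₀cp : ∀ ω₁, IsCompact (A₀ ω₁))
    (hA₀inv : ∀ t : ℝ, 0 ≤ t → ∀ ω₁, Φ₀ t ω₁ '' A₀ ω₁ = A₀ (θ₁ t ω₁))
    (hA₀att : ∀ ω₁, ∀ B ∈ 𝒟₀, ∀ ε > (0:ℝ), ∃ T : ℝ, ∀ t ≥ T,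
        Φ₀ t (θ₁ (-t) ω₁) '' B (θ₁ (-t) ω₁) ⊆ thickening ε (A₀ ω₁))
    (R : Ω₁ → ℝ)
    -- (C1'): convergence of the cocycles towards `Φ₀`
    (hC1 : ∀ t : ℝ, 0 ≤ t → ∀ ω₁ ω₂, ∀ (l : ℕ → Λ) (x : ℕ → X) (x₀ : X),
        (∀ n, l n ≠ l₀) → Tendsto l atTop (𝓝 l₀) → Tendsto x atTop (𝓝 x₀) →
        Tendsto (fun n => Φ (l n) t ω₁ ω₂ (x n)) atTop (𝓝 (Φ₀ t ω₁ x₀)))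
    -- (C2'): the family of closed balls of radii `R` belongs to `𝒟₀`
    (hC2 : (fun ω₁ => {x : X | ‖x‖ ≤ R ω₁}) ∈ 𝒟₀)
    -- (C3'): `limsup_{λ→λ₀} ‖K_λ(ω₁,ω₂)‖ ≤ R(ω₁)`
    (hC3 : ∀ ω₁ ω₂, ∀ ε > (0:ℝ), ∀ᶠ l in 𝓝[≠] l₀, ∀ x ∈ K l ω₁ ω₂, ‖x‖ ≤ R ω₁ + ε)
    -- (C4'): precompactness of the union of the attractors
    (hC4 : ∀ ω₁ ω₂, IsCompact (closure (A₀ ω₁ ∪ ⋃ (l : Λ) (_ : l ≠ l₀), A l ω₁ ω₂))) :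
    ∀ ω₁ ω₂, ∀ ε > (0:ℝ), ∀ᶠ l in 𝓝[≠] l₀, A l ω₁ ω₂ ⊆ thickening ε (A₀ ω₁) :=
  upper_semicontinuity_to_deterministic_nonautonomous_general θ₁ θ₂ P hθ₁ hθ₂ Φ l₀ 𝒟 A K hA𝒟 hAinv
    hKabs Φ₀ 𝒟₀ A₀ hA₀att R hC1 hC2 hC3 hC4

end UpperSemicontinuityDet
end

section
/- Suppose conditions (C1'')–(C4'') hold: (C1'') for every t ≥ 0, ω₁ ∈ Ω₁, ω₂ ∈ Ω₂, every sequence λ_n → λ₀ in Λ and every x_n → x in X, one has Φ_{λ_n}(t, ω₁, ω₂, x_n) → Φ_{λ₀}(t, x); (C3'') there exists a constant C > 0 such that for all ω₁, ω₂, limsup_{λ→λ₀} ‖K_λ(ω₁,ω₂)‖ ≤ C, where ‖S‖ = sup_{x∈S} ‖x‖; (C4'') for all ω₁, ω₂, the union of A_{λ₀} and all A_λ(ω₁,ω₂) for λ ∈ Λ, λ ≠ λ₀, is precompact in X. Then for every ω₁ ∈ Ω₁ and ω₂ ∈ Ω₂, dist(A_λ(ω₁,ω₂), A_{λ₀}) →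 0 as λ → λ₀, where dist(E,F) = sup_{a∈E} inf_{b∈F} ‖a−b‖. -/
open Set Metric MeasureTheory Filter Topology

section UpperSemicontinuityAut

variable {X : Type*} [NormedAddCommGroup X] [NormedSpace ℝ X] [CompleteSpace X]
  [MeasurableSpace X] [BorelSpace X]
variable {Ω₁ : Type*} {Ω₂ : Type*} [MeasurableSpace Ω₂]
variable {Λ : Type*} [MetricSpace Λ]

/-- Theorem 3.3. Upper semicontinuity of random pullback attractors
`A_λ` towards the global attractor `A₀` of an autonomous semigroup `Φ₀` as `λ → λ₀`,
under conditions (C1'')–(C4''). -/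
theorem upper_semicontinuity_to_autonomous
    [Nonempty Ω₁]
    (θ₁ : ℝ → Ω₁ → Ω₁) (θ₂ : ℝ → Ω₂ → Ω₂)
    (P : Measure Ω₂) [IsProbabilityMeasure P]
    (hθ₁ : IsParamDS₁ θ₁) (hθ₂ : IsParamDS₂ P θ₂)
    (Φ : Λ → ℝ → Ω₁ → Ω₂ → X → X) (l₀ : Λ)
    (𝒟 : Λ → Set (Ω₁ → Ω₂ → Set X))
    (A K : Λ → Ω₁ → Ω₂ → Set X)
    -- the random cocycles, attractors and absorbing sets, for `l ≠ l₀`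
    (hΦ : ∀ l : Λ, l ≠ l₀ → IsCocycle θ₁ θ₂ (Φ l))
    (h𝒟ne : ∀ l : Λ, l ≠ l₀ → ∀ D ∈ 𝒟 l, ∀ ω₁ ω₂, (D ω₁ ω₂).Nonempty)
    (hA𝒟 : ∀ l : Λ, l ≠ l₀ → A l ∈ 𝒟 l)
    (hAcp : ∀ l : Λ, l ≠ l₀ → ∀ ω₁ ω₂, IsCompact (A l ω₁ ω₂))
    (hAinv : ∀ l : Λ, l ≠ l₀ → ∀ t : ℝ, 0 ≤ t → ∀ ω₁ ω₂,
        Φ l t ω₁ ω₂ '' A l ω₁ ω₂ = A l (θ₁ t ω₁) (θ₂ t ω₂))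
    (hAatt : ∀ l : Λ, l ≠ l₀ → AttractsFam θ₁ θ₂ (Φ l) (𝒟 l) (A l))
    (hK𝒟 : ∀ l : Λ, l ≠ l₀ → K l ∈ 𝒟 l)
    (hKabs : ∀ l : Λ, l ≠ l₀ → AbsorbsFam θ₁ θ₂ (Φ l) (𝒟 l) (K l))
    -- the limiting autonomous semigroup `Φ₀` and its global attractor `A₀`
    (Φ₀ : ℝ → X → X)
    (A₀ : Set X)
    (hΦ₀id : Φ₀ 0 = id)
    (hΦ₀sg : ∀ t τ : ℝ, 0 ≤ t → 0 ≤ τ → Φ₀ (t + τ) = (Φ₀ t) ∘ (Φ₀ τ))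
    (hΦ₀cont : ∀ t : ℝ, 0 ≤ t → Continuous (Φ₀ t))
    (hA₀ne : A₀.Nonempty)
    (hA₀cp : IsCompact A₀)
    (hA₀inv : ∀ t : ℝ, 0 ≤ t → Φ₀ t '' A₀ = A₀)
    (hA₀att : ∀ B : Set X, Bornology.IsBounded B → ∀ ε > (0:ℝ), ∃ T : ℝ, ∀ t ≥ T,
        Φ₀ t '' B ⊆ thickening ε A₀)
    (C : ℝ) (hC : 0 < C)
    -- (C1''): convergence of the cocycles towards `Φ₀`
    (hC1 : ∀ t : ℝ, 0 ≤ t → ∀ ω₁ ω₂, ∀ (l : ℕ → Λ) (x : ℕ → X) (x₀ : X),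
        (∀ n, l n ≠ l₀) → Tendsto l atTop (𝓝 l₀) → Tendsto x atTop (𝓝 x₀) →
        Tendsto (fun n => Φ (l n) t ω₁ ω₂ (x n)) atTop (𝓝 (Φ₀ t x₀)))
    -- (C3''): `limsup_{λ→λ₀} ‖K_λ(ω₁,ω₂)‖ ≤ C`
    (hC3 : ∀ ω₁ ω₂, ∀ ε > (0:ℝ), ∀ᶠ l in 𝓝[≠] l₀, ∀ x ∈ K l ω₁ ω₂, ‖x‖ ≤ C + ε)
    -- (C4''): precompactness of the union of the attractors
    (hC4 : ∀ ω₁ ω₂, IsCompact (closure (A₀ ∪ ⋃ (l : Λ) (_ : l ≠ l₀), A l ω₁ ω₂))) :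
    ∀ ω₁ ω₂, ∀ ε > (0:ℝ), ∀ᶠ l in 𝓝[≠] l₀, A l ω₁ ω₂ ⊆ thickening ε A₀ := by
  intro ω₁ ω₂ ε hε
  by_contra h
  -- A_l ⊆ K_l for every l ≠ l₀, at every base point
  have hid₁ : ∀ (t : ℝ) (w : Ω₁), θ₁ t (θ₁ (-t) w) = w := by
    intro t w
    have h2 := hθ₁.2 (-t) t
    have : (θ₁ t ∘ θ₁ (-t)) w = θ₁ ((-t) + t) w := by rw [h2]
    simpa [hθ₁.1] using this
  have hid₂ : ∀ (t : ℝ) (w : Ω₂), θ₂ t (θ₂ (-t) w) = w := by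
    intro t w
    have h2 := hθ₂.2.2.1 (-t) t
    have : (θ₂ t ∘ θ₂ (-t)) w = θ₂ ((-t) + t) w := by rw [h2]
    simpa [hθ₂.2.1] using this
  have hAK : ∀ l, l ≠ l₀ → ∀ (w₁ : Ω₁) (w₂ : Ω₂), A l w₁ w₂ ⊆ K l w₁ w₂ := by
    intro l hl w₁ w₂
    obtain ⟨T', hT', habs⟩ := hKabs l hl w₁ w₂ (A l) (hA𝒟 l hl)
    have h := habs T' le_rfl
    unfold pbImage at h
    rw [hAinv l hl T' hT'.le, hid₁, hid₂] at h
    exact h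
  -- fix the pullback time t
  obtain ⟨T, hT⟩ := hA₀att (closedBall 0 (C + 1)) isBounded_closedBall (ε / 2) (by linarith)
  set t : ℝ := max T 0 with ht_def
  have ht : (0:ℝ) ≤ t := le_max_right _ _
  have htT : T ≤ t := le_max_left _ _
  set w₁ : Ω₁ := θ₁ (-t) ω₁ with hw₁
  set w₂ : Ω₂ := θ₂ (-t) ω₂ with hw₂
  -- frequently: l ≠ l₀, K-bound at (w₁, w₂), and non-inclusion
  have hfreq : ∃ᶠ l in 𝓝[≠] l₀, (l ≠ l₀ ∧ (∀ x ∈ K l w₁ w₂, ‖x‖ ≤ C + 1) ∧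
      ¬ A l ω₁ ω₂ ⊆ thickening ε A₀) := by
    have h1 : ∀ᶠ l in 𝓝[≠] l₀, l ≠ l₀ := eventually_mem_nhdsWithin
    have h2 := hC3 w₁ w₂ 1 one_pos
    have h3 : ∃ᶠ l in 𝓝[≠] l₀, ¬ A l ω₁ ω₂ ⊆ thickening ε A₀ :=
      Filter.not_eventually.mp h
    exact ((h1.and h2).and_frequently h3).mono (by tauto)
  obtain ⟨l, hlt, hQ⟩ := Filter.exists_seq_forall_of_frequently hfreq
  have hne : ∀ n, l n ≠ l₀ := fun n => (hQ n).1
  have hlt0 : Tendsto l atTop (𝓝 l₀) := hlt.mono_right nhdsWithin_le_nhds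
  -- pick xₙ ∈ A_{lₙ}(ω₁,ω₂) outside the thickening
  choose x hxA hxnot using fun n => Set.not_subset.mp (hQ n).2.2
  -- pull back via invariance
  have himg : ∀ n, x n ∈ Φ (l n) t w₁ w₂ '' A (l n) w₁ w₂ := by
    intro n
    rw [hAinv (l n) (hne n) t ht w₁ w₂, hw₁, hw₂, hid₁, hid₂]
    exact hxA n
  choose y hyA hyx using himg
  -- yₙ in the compact set from (C4'')
  have hycpt : ∀ n, y n ∈ closure (A₀ ∪ ⋃ (l : Λ) (_ : l ≠ l₀), A l w₁ w₂) := by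
    intro n
    exact subset_closure (Or.inr (mem_iUnion₂.mpr ⟨l n, hne n, hyA n⟩))
  obtain ⟨ylim, _, φ, hφ, hyconv⟩ := (hC4 w₁ w₂).tendsto_subseq hycpt
  -- the limit is in the ball of radius C + 1
  have hybd : ∀ n, ‖y n‖ ≤ C + 1 := fun n =>
    (hQ n).2.1 (y n) (hAK (l n) (hne n) w₁ w₂ (hyA n))
  have hylim_bd : ‖ylim‖ ≤ C + 1 := by
    have hnorm : Tendsto (fun n => ‖y (φ n)‖) atTop (𝓝 ‖ylim‖) := hyconv.norm
    exact le_of_tendsto hnorm (Filter.Eventually.of_forall fun n => hybd (φ n))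
  -- pass to the limit via (C1'')
  have hconv : Tendsto (fun n => Φ (l (φ n)) t w₁ w₂ (y (φ n))) atTop (𝓝 (Φ₀ t ylim)) :=
    hC1 t ht w₁ w₂ (l ∘ φ) (y ∘ φ) ylim (fun n => hne (φ n))
      (hlt0.comp hφ.tendsto_atTop) hyconv
  have hconv' : Tendsto (fun n => x (φ n)) atTop (𝓝 (Φ₀ t ylim)) := by
    simpa only [hyx] using hconv
  -- the limit lies in the ε/2-thickening of A₀
  have hmem : Φ₀ t ylim ∈ thickening (ε / 2) A₀ :=
    hT t htT ⟨ylim, mem_closedBall_zero_iff.mpr hylim_bd, rfl⟩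
  have hev : ∀ᶠ n in atTop, x (φ n) ∈ thickening (ε / 2) A₀ :=
    hconv'.eventually_mem (isOpen_thickening.mem_nhds hmem)
  obtain ⟨n, hn⟩ := hev.exists
  exact hxnot (φ n) (thickening_mono (by linarith) A₀ hn)


end UpperSemicontinuityAut
end

section
/- For every τ ∈ ℝ, the integral ∫_{−∞}^{0} e^{λs} e^{−2αω(s)} (1 + h(s+τ)) ds is finite. -/
open Set MeasureTheory Filter Topology

/-!
Because `ω` is continuous and grows sublinearly at `-∞`, for every `μ < λ` there is a `C` with
`e^{λs} e^{-2αω(s)} ≤ C e^{μs}` for all `s ≤ 0`. Taking `μ = max δ (λ/2) ∈ (0, λ)`, the integrand is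
dominated by `C (e^{μs} + e^{δs} h(s+τ))`: the first part is integrable since `μ > 0`, and the second
is, after the shift `u = s + τ`, a constant multiple of `∫_{-∞}^{τ} e^{δu} h(u) du`.
-/

theorem exists_abs_le_sub_mul_of_tendsto_div_atBot {f : ℝ → ℝ} (hf : Continuous f)
    (hlim : Tendsto (fun t => f t / t) atBot (𝓝 0)) {ε : ℝ} (hε : 0 < ε) :
    ∃ C, ∀ s ≤ 0, |f s| ≤ C - ε * s := by
  obtain ⟨b, hb⟩ : ∃ b, ∀ t ≤ b, |f t| / |t| < ε := by
    simpa [Real.dist_eq] using eventually_atBot.mp (Metric.tendsto_nhds.mp hlim ε hε)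
  obtain ⟨M, hM⟩ :=
    (isCompact_Icc (a := min b 0) (b := 0)).exists_bound_of_continuousOn hf.continuousOn
  have hM0 : 0 ≤ M := (norm_nonneg _).trans (hM 0 ⟨min_le_right _ _, le_rfl⟩)
  refine ⟨M, fun s hs => ?_⟩
  rcases le_or_gt (min b 0) s with hbs | hsb
  · have hfs : |f s| ≤ M := hM s ⟨hbs, hs⟩
    nlinarith
  · have hs0 : s < 0 := hsb.trans_le (min_le_right _ _)
    have hfs := hb s (hsb.le.trans (min_le_left _ _))
    rw [div_lt_iff₀ (abs_pos.mpr hs0.ne), abs_of_neg hs0] at hfs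
    linarith

theorem exists_exp_mul_mul_exp_le {f : ℝ → ℝ} (hf : Continuous f)
    (hlim : Tendsto (fun t => f t / t) atBot (𝓝 0)) {lam μ : ℝ} (hμ : μ < lam) :
    ∃ C, ∀ s ≤ 0, Real.exp (lam * s) * Real.exp (f s) ≤ C * Real.exp (μ * s) := by
  obtain ⟨C, hC⟩ := exists_abs_le_sub_mul_of_tendsto_div_atBot hf hlim (sub_pos.mpr hμ)
  refine ⟨Real.exp C, fun s hs => ?_⟩
  rw [← Real.exp_add, ← Real.exp_add, Real.exp_le_exp]
  linarith [le_abs_self (f s), hC s hs]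

theorem setLIntegral_Iic_comp_add_right (F : ℝ → ENNReal) (a τ : ℝ) :
    ∫⁻ s in Iic a, F (s + τ) = ∫⁻ u in Iic (a + τ), F u := by
  rw [(measurePreserving_add_right volume τ).setLIntegral_comp_emb
    (measurableEmbedding_addRight τ), image_add_const_Iic]

theorem setLIntegral_Iic_ofReal_exp_mul_lt_top {μ : ℝ} (hμ : 0 < μ) (a : ℝ) :
    ∫⁻ s in Iic a, ENNReal.ofReal (Real.exp (μ * s)) < ⊤ :=
  (integrableOn_exp_mul_Iic hμ a).lintegral_lt_top

theorem setLIntegral_Iic_ofReal_exp_mul_comp_add_lt_top {δ τ : ℝ} {g : ℝ → ℝ}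
    (hg : ∫⁻ u in Iic τ, ENNReal.ofReal (Real.exp (δ * u) * g u) < ⊤) :
    ∫⁻ s in Iic 0, ENNReal.ofReal (Real.exp (δ * s) * g (s + τ)) < ⊤ := by
  have hshift : ∀ s, ENNReal.ofReal (Real.exp (δ * s) * g (s + τ)) =
      ENNReal.ofReal (Real.exp (-(δ * τ))) *
        ENNReal.ofReal (Real.exp (δ * (s + τ)) * g (s + τ)) := by
    intro s
    rw [← ENNReal.ofReal_mul (Real.exp_pos _).le, ← mul_assoc, ← Real.exp_add]
    ring_nf
  simp_rw [hshift]
  rw [lintegral_const_mul' _ _ ENNReal.ofReal_ne_top,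
    setLIntegral_Iic_comp_add_right (fun u => ENNReal.ofReal (Real.exp (δ * u) * g u)), zero_add]
  exact ENNReal.mul_lt_top ENNReal.ofReal_lt_top hg

theorem ofReal_mul_one_add_le {w C a b g : ℝ} (hw : 0 ≤ w) (ha : 0 < a) (hwa : w ≤ C * a)
    (hab : a ≤ b) :
    ENNReal.ofReal (w * (1 + g)) ≤
      ENNReal.ofReal C * (ENNReal.ofReal a + ENNReal.ofReal (b * g)) := by
  have hC : 0 ≤ C := nonneg_of_mul_nonneg_left (hw.trans hwa) ha
  calc ENNReal.ofReal (w * (1 + g))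
      ≤ ENNReal.ofReal w + ENNReal.ofReal w * ENNReal.ofReal g := by
        rw [mul_one_add, ← ENNReal.ofReal_mul hw]; exact ENNReal.ofReal_add_le
    _ ≤ ENNReal.ofReal (C * a) + ENNReal.ofReal (C * b) * ENNReal.ofReal g := by
        gcongr
        exact hwa.trans (by gcongr)
    _ = _ := by
        rw [ENNReal.ofReal_mul hC, ENNReal.ofReal_mul hC, ENNReal.ofReal_mul (ha.le.trans hab),
          mul_add, mul_assoc]

theorem absorbing_radius_integral_finite_general
    (lam α δ : ℝ) (hlam : 0 < lam) (hδ : δ < lam)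
    (ω : ℝ → ℝ) (hω : Continuous ω)
    (hωlim : Tendsto (fun t => ω t / t) atBot (𝓝 0))
    (h : ℝ → ℝ)
    (hint : ∀ τ : ℝ, ∫⁻ s in Iic τ, ENNReal.ofReal (Real.exp (δ * s) * h s) < ⊤)
    (τ : ℝ) :
    ∫⁻ s in Iic (0:ℝ),
        ENNReal.ofReal (Real.exp (lam * s) * Real.exp (-2 * α * ω s) * (1 + h (s + τ)))
      < ⊤ := by
  set μ := max δ (lam / 2)
  obtain ⟨C, hC⟩ := exists_exp_mul_mul_exp_le (f := fun s => -2 * α * ω s) (by fun_prop)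
    (by simpa only [mul_zero, mul_div_assoc] using hωlim.const_mul (-2 * α))
    (max_lt hδ (half_lt_self hlam) : μ < lam)
  calc _ ≤ ∫⁻ s in Iic (0:ℝ), ENNReal.ofReal C * (ENNReal.ofReal (Real.exp (μ * s)) +
          ENNReal.ofReal (Real.exp (δ * s) * h (s + τ))) :=
        setLIntegral_mono' measurableSet_Iic fun s hs =>
          ofReal_mul_one_add_le (by positivity) (Real.exp_pos _) (hC s hs)
            (Real.exp_le_exp.mpr (mul_le_mul_of_nonpos_right (le_max_left _ _) hs))
    _ < ⊤ := by
      rw [lintegral_const_mul' _ _ ENNReal.ofReal_ne_top, lintegral_add_left (by fun_prop)]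
      exact ENNReal.mul_lt_top ENNReal.ofReal_lt_top (ENNReal.add_lt_top.mpr
        ⟨setLIntegral_Iic_ofReal_exp_mul_lt_top (lt_max_of_lt_right (half_pos hlam)) 0,
          setLIntegral_Iic_ofReal_exp_mul_comp_add_lt_top (hint τ)⟩)

/-- Let `λ > 0`, `α > 0`, `0 ≤ δ < λ`, let `ω : ℝ → ℝ` be continuous with
`ω(t)/t → 0` as `t → -∞`, and let `h : ℝ → [0,∞)` be measurable with
`∫_{-∞}^{τ} e^{δs} h(s) ds < ∞` for every `τ`. Then for every `τ ∈ ℝ` the integral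
`∫_{-∞}^{0} e^{λs} e^{-2αω(s)} (1 + h(s+τ)) ds` is finite. -/
theorem absorbing_radius_integral_finite
    (lam α δ : ℝ) (hlam : 0 < lam) (hα : 0 < α) (hδ0 : 0 ≤ δ) (hδ : δ < lam)
    (ω : ℝ → ℝ) (hω : Continuous ω)
    (hωlim : Tendsto (fun t => ω t / t) atBot (𝓝 0))
    (h : ℝ → ℝ) (hmeas : Measurable h) (hpos : ∀ s, 0 ≤ h s)
    (hint : ∀ τ : ℝ, ∫⁻ s in Iic τ, ENNReal.ofReal (Real.exp (δ * s) * h s) < ⊤)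
    (τ : ℝ) :
    ∫⁻ s in Iic (0:ℝ),
        ENNReal.ofReal (Real.exp (lam * s) * Real.exp (-2 * α * ω s) * (1 + h (s + τ)))
      < ⊤ :=
  absorbing_radius_integral_finite_general lam α δ hlam hδ ω hω hωlim h hint τ
end

section
/- For every c > 0 and every τ ∈ ℝ, one has lim_{t→−∞} e^{ct} M(τ+t, θ_t ω)² = 0, where M(σ, ω)² = ∫_{−∞}^{0} e^{λs} e^{−2αω(s)} (1 + h(s+σ)) ds and (θ_t ω)(s) = ω(s+t) − ω(t). In particular, the family of closed balls K(τ,ω) = { u ∈ L²(ℝⁿ) : ‖u‖ ≤ c₀ M(τ,ω) } (for any fixed constant c₀ > 0) is tempered. -/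
/-!
Continuity and sublinear growth of `ω` at `±∞` give `|ω r| ≤ ε |r| + C/2` for every `ε > 0`, hence
`|θ_t ω (s)| ≤ ε (|s| + 2|t|) + C`. For `s, t ≤ 0` this bounds the weight
`e^{ct} e^{λs} e^{-2αθ_t ω(s)}` by `e^{2αC} e^{(c - 4αε)t} e^{(λ - 2αε)s}`. Taking `ε` so small that
`δ ≤ λ - 2αε`, `0 < λ - 2αε` and `4αε < c`, the factor `e^{(λ - 2αε)s}` is integrable on `(-∞, 0]`
and dominated by `e^{δs}`, so
`e^{ct} M(τ+t, θ_t ω)² ≤ e^{2αC} e^{(c - 4αε)t} (1/(λ - 2αε) + ∫ e^{δs} h(s+τ+t) ds)`,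
which tends to `0` because `h` is tempered.
For the balls, the supremum of the norms is at most the radius and `e^{ct} M = (e^{2ct} M²)^{1/2}`.
-/

open Set MeasureTheory Filter Topology ENNReal

noncomputable section

/-- The shifted Wiener path `(θ_t ω)(s) = ω(s+t) - ω(t)`. -/
def pathShift (t : ℝ) (ω : ℝ → ℝ) : ℝ → ℝ := fun s => ω (s + t) - ω t

/-- `M(σ,ω)² = ∫_{-∞}^{0} e^{λs} e^{-2αω(s)} (1 + h(s+σ)) ds`, the squared radius of the
pullback absorbing ball. -/
def M2 (lam α : ℝ) (h : ℝ → ℝ) (σ : ℝ) (w : ℝ → ℝ) : ℝ≥0∞ :=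
  ∫⁻ s in Iic (0:ℝ),
    ENNReal.ofReal (Real.exp (lam * s) * Real.exp (-2 * α * w s) * (1 + h (s + σ)))

/-- The space `L²(ℝⁿ)`. -/
abbrev L2Space (n : ℕ) : Type :=
  MeasureTheory.Lp ℝ 2 (volume : Measure (EuclideanSpace ℝ (Fin n)))

open Asymptotics Real

theorem Continuous.exists_norm_le_mul_norm_add_of_isLittleO {X E F : Type*} [TopologicalSpace X]
    [SeminormedAddCommGroup E] [SeminormedAddCommGroup F] {f : X → E} {g : X → F}
    (hf : Continuous f) (hfg : f =o[cocompact X] g) {ε : ℝ} (hε : 0 < ε) :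
    ∃ C, ∀ x, ‖f x‖ ≤ ε * ‖g x‖ + C := by
  obtain ⟨K, hK, hKc⟩ := mem_cocompact.1 (hfg.def hε)
  obtain ⟨C, hC⟩ := hK.exists_bound_of_continuousOn hf.continuousOn
  refine ⟨max C 0, fun x => ?_⟩
  by_cases hx : x ∈ K
  · linarith [hC x hx, le_max_left C 0, mul_nonneg hε.le (norm_nonneg (g x))]
  · linarith [show ‖f x‖ ≤ ε * ‖g x‖ from hKc hx, le_max_right C 0]

theorem isLittleO_id_cocompact_of_tendsto_div {ω : ℝ → ℝ}
    (hbot : Tendsto (fun t => ω t / t) atBot (𝓝 0))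
    (htop : Tendsto (fun t => ω t / t) atTop (𝓝 0)) : ω =o[cocompact ℝ] id := by
  have hne : ∀ l, l ≤ cocompact ℝ → ∀ᶠ t in l, id t = 0 → ω t = 0 := fun l hl =>
    hl <| (mem_cocompact.2 ⟨{0}, isCompact_singleton, fun t ht h0 => (ht h0).elim⟩)
  rw [cocompact_eq_atBot_atTop]
  exact ((isLittleO_iff_tendsto' (hne _ atBot_le_cocompact)).2 hbot).sup
    ((isLittleO_iff_tendsto' (hne _ atTop_le_cocompact)).2 htop)

theorem exists_abs_pathShift_le {ω : ℝ → ℝ} (hω : Continuous ω) (ho : ω =o[cocompact ℝ] id)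
    {ε : ℝ} (hε : 0 < ε) : ∃ C, ∀ t s, |pathShift t ω s| ≤ ε * (|s| + 2 * |t|) + C := by
  obtain ⟨C, hC⟩ := hω.exists_norm_le_mul_norm_add_of_isLittleO ho hε
  simp only [Real.norm_eq_abs, id] at hC
  refine ⟨2 * C, fun t s => ?_⟩
  calc |pathShift t ω s| ≤ |ω (s + t)| + |ω t| := abs_sub _ _
    _ ≤ ε * |s + t| + C + (ε * |t| + C) := add_le_add (hC _) (hC _)
    _ ≤ ε * (|s| + 2 * |t|) + 2 * C := by nlinarith [abs_add_le s t]

theorem ofReal_exp_mul_M2_pathShift_le {lam α δ ε C c t σ : ℝ} {ω h : ℝ → ℝ} (hα : 0 ≤ α)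
    (hkδ : δ ≤ lam - 2 * α * ε) (hpos : ∀ s, 0 ≤ h s)
    (hθ : ∀ s, |pathShift t ω s| ≤ ε * (|s| + 2 * |t|) + C) (ht : t ≤ 0) :
    ENNReal.ofReal (exp (c * t)) * M2 lam α h σ (pathShift t ω) ≤
      ENNReal.ofReal (exp (2 * α * C + (c - 4 * α * ε) * t)) *
        ((∫⁻ s in Iic (0:ℝ), ENNReal.ofReal (exp ((lam - 2 * α * ε) * s))) +
          ∫⁻ s in Iic (0:ℝ), ENNReal.ofReal (exp (δ * s) * h (s + σ))) := by
  rw [M2, ← lintegral_const_mul' _ _ ofReal_ne_top, ← lintegral_add_left (by fun_prop),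
    ← lintegral_const_mul' _ _ ofReal_ne_top]
  refine setLIntegral_mono' measurableSet_Iic fun s (hs : s ≤ 0) => ?_
  have hexp : c * t + (lam * s + -2 * α * pathShift t ω s) ≤
      2 * α * C + (c - 4 * α * ε) * t + (lam - 2 * α * ε) * s := by
    have := hθ s
    rw [abs_of_nonpos hs, abs_of_nonpos ht] at this
    nlinarith [neg_abs_le (pathShift t ω s)]
  have hδs : exp ((lam - 2 * α * ε) * s) ≤ exp (δ * s) :=
    exp_le_exp.2 (mul_le_mul_of_nonpos_right hkδ hs)
  rw [← ofReal_mul (exp_nonneg _), ← ofReal_add (exp_nonneg _)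
    (mul_nonneg (exp_nonneg _) (hpos _)), ← ofReal_mul (exp_nonneg _)]
  refine ofReal_le_ofReal ?_
  calc exp (c * t) * (exp (lam * s) * exp (-2 * α * pathShift t ω s) * (1 + h (s + σ)))
      = exp (c * t + (lam * s + -2 * α * pathShift t ω s)) * (1 + h (s + σ)) := by
        rw [exp_add, exp_add]; ring
    _ ≤ exp (2 * α * C + (c - 4 * α * ε) * t + (lam - 2 * α * ε) * s) * (1 + h (s + σ)) := by
        gcongr; linarith [hpos (s + σ)]
    _ = exp (2 * α * C + (c - 4 * α * ε) * t) * (exp ((lam - 2 * α * ε) * s) +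
          exp ((lam - 2 * α * ε) * s) * h (s + σ)) := by rw [exp_add]; ring
    _ ≤ _ := by gcongr; exact hpos _

theorem tendsto_ofReal_exp_mul_atBot {d : ℝ} (hd : 0 < d) :
    Tendsto (fun t => ENNReal.ofReal (exp (d * t))) atBot (𝓝 0) := by
  simpa [Function.comp_def] using (ENNReal.continuous_ofReal.tendsto 0).comp
    (tendsto_exp_atBot.comp (tendsto_id.const_mul_atBot hd))

theorem Filter.Tendsto.ofReal_exp_add_mul_comp_add {I : ℝ → ℝ≥0∞} {d : ℝ}
    (hI : Tendsto (fun t => ENNReal.ofReal (Real.exp (d * t)) * I t) atBot (𝓝 0)) (a τ : ℝ) :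
    Tendsto (fun t => ENNReal.ofReal (Real.exp (a + d * t)) * I (τ + t)) atBot (𝓝 0) := by
  have := ENNReal.Tendsto.const_mul (a := ENNReal.ofReal (Real.exp (a - d * τ)))
    (hI.comp (tendsto_atBot_add_const_left _ τ tendsto_id)) (Or.inr ofReal_ne_top)
  rw [mul_zero] at this
  refine this.congr fun t => ?_
  simp only [Function.comp_apply, id, ← mul_assoc, ← ofReal_mul (Real.exp_nonneg _),
    ← Real.exp_add]
  ring_nf

theorem tendsto_ofReal_exp_mul_M2_pathShift {lam α δ c : ℝ} {ω h : ℝ → ℝ} (hlam : 0 < lam)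
    (hα : 0 < α) (hδ : δ < lam) (hω : Continuous ω) (ho : ω =o[cocompact ℝ] id)
    (hpos : ∀ s, 0 ≤ h s)
    (htemp : ∀ c > (0:ℝ),
        Tendsto (fun t => ENNReal.ofReal (exp (c * t)) *
            ∫⁻ s in Iic (0:ℝ), ENNReal.ofReal (exp (δ * s) * h (s + t)))
          atBot (𝓝 0))
    (hc : 0 < c) (τ : ℝ) :
    Tendsto (fun t => ENNReal.ofReal (exp (c * t)) * M2 lam α h (τ + t) (pathShift t ω))
      atBot (𝓝 0) := by
  obtain ⟨ε, hε, hsmall⟩ := exists_pos_mul_lt (lt_min (lt_min (sub_pos.2 hδ) hlam) hc) (4 * α)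
  have hαε := mul_pos hα hε
  have hk : 0 < lam - 2 * α * ε := by
    linarith [min_le_left (min (lam - δ) lam) c, min_le_right (lam - δ) lam]
  have hkδ : δ ≤ lam - 2 * α * ε := by
    linarith [min_le_left (min (lam - δ) lam) c, min_le_left (lam - δ) lam]
  have hd : 0 < c - 4 * α * ε := by linarith [min_le_right (min (lam - δ) lam) c]
  obtain ⟨C, hC⟩ := exists_abs_pathShift_le hω ho hε
  have hA : ∫⁻ s in Iic (0:ℝ), ENNReal.ofReal (exp ((lam - 2 * α * ε) * s)) ≠ ∞ :=
    (Integrable.lintegral_lt_top (integrableOn_exp_mul_Iic hk 0)).ne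
  have hAterm := ENNReal.Tendsto.mul_const (tendsto_ofReal_exp_mul_atBot hd) (Or.inr hA)
  rw [zero_mul] at hAterm
  have hbound := (hAterm.ofReal_exp_add_mul_comp_add (2 * α * C) τ).add
    ((htemp _ hd).ofReal_exp_add_mul_comp_add (2 * α * C) τ)
  simp only [← mul_add, add_zero] at hbound
  refine tendsto_of_tendsto_of_tendsto_of_le_of_le' tendsto_const_nhds hbound
    (Eventually.of_forall fun _ => zero_le) ?_
  filter_upwards [eventually_le_atBot 0] with t ht
  exact ofReal_exp_mul_M2_pathShift_le hα.le hkδ hpos (hC t) ht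

theorem tendsto_exp_mul_sSup_norm_le {E : Type*} [SeminormedAddCommGroup E] {l : Filter ℝ}
    {m : ℝ → ℝ≥0∞} {c c₀ : ℝ} (hc₀ : 0 ≤ c₀)
    (hm : Tendsto (fun t => ENNReal.ofReal (exp (2 * c * t)) * m t) l (𝓝 0)) :
    Tendsto (fun t => exp (c * t) *
      sSup ((fun u : E => ‖u‖) '' {u | ‖u‖ ≤ c₀ * √(m t).toReal})) l (𝓝 0) := by
  have hsqrt : ∀ t,
      exp (c * t) * √(m t).toReal = √(ENNReal.ofReal (exp (2 * c * t)) * m t).toReal := by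
    intro t
    rw [toReal_mul, toReal_ofReal (exp_nonneg _), sqrt_mul (exp_nonneg _), ← exp_half]
    ring_nf
  have hlim : Tendsto (fun t => √(ENNReal.ofReal (exp (2 * c * t)) * m t).toReal) l (𝓝 0) := by
    simpa only [Function.comp_def, toReal_zero, sqrt_zero] using
      (continuous_sqrt.tendsto 0).comp ((ENNReal.tendsto_toReal zero_ne_top).comp hm)
  refine squeeze_zero (g := fun t => exp (c * t) * (c₀ * √(m t).toReal))
    (fun t => mul_nonneg (exp_nonneg _) (Real.sSup_nonneg ?_))
    (fun t => mul_le_mul_of_nonneg_left (Real.sSup_le ?_ (by positivity)) (exp_nonneg _)) ?_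
  · rintro _ ⟨u, -, rfl⟩
    exact norm_nonneg u
  · rintro _ ⟨u, hu, rfl⟩
    exact hu
  · simpa [mul_left_comm, hsqrt] using hlim.const_mul c₀

theorem absorbing_radius_tempered_general
    (lam α δ : ℝ) (hlam : 0 < lam) (hα : 0 < α) (hδ : δ < lam)
    (ω : ℝ → ℝ) (hω : Continuous ω)
    (hωbot : Tendsto (fun t => ω t / t) atBot (𝓝 0))
    (hωtop : Tendsto (fun t => ω t / t) atTop (𝓝 0))
    (h : ℝ → ℝ) (hpos : ∀ s, 0 ≤ h s)
    (htemp : ∀ c > (0:ℝ),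
        Tendsto (fun t => ENNReal.ofReal (Real.exp (c * t)) *
            ∫⁻ s in Iic (0:ℝ), ENNReal.ofReal (Real.exp (δ * s) * h (s + t)))
          atBot (𝓝 0)) :
    (∀ c > (0:ℝ), ∀ τ : ℝ,
        Tendsto (fun t => ENNReal.ofReal (Real.exp (c * t)) *
            M2 lam α h (τ + t) (pathShift t ω))
          atBot (𝓝 0)) ∧
    (∀ (n : ℕ) (c₀ : ℝ), 0 < c₀ → ∀ c > (0:ℝ), ∀ τ : ℝ,
        Tendsto (fun t => Real.exp (c * t) *
            sSup ((fun u => ‖u‖) ''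
              {u : L2Space n |
                ‖u‖ ≤ c₀ * Real.sqrt (M2 lam α h (τ + t) (pathShift t ω)).toReal}))
          atBot (𝓝 0)) := by
  have hM : ∀ c > (0:ℝ), ∀ τ : ℝ, Tendsto (fun t => ENNReal.ofReal (Real.exp (c * t)) *
      M2 lam α h (τ + t) (pathShift t ω)) atBot (𝓝 0) := fun c hc =>
    tendsto_ofReal_exp_mul_M2_pathShift hlam hα hδ hω
      (isLittleO_id_cocompact_of_tendsto_div hωbot hωtop) hpos htemp hc
  exact ⟨hM, fun n c₀ hc₀ c hc τ => tendsto_exp_mul_sSup_norm_le hc₀.le (hM _ (by positivity) τ)⟩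

/-- If `h` is tempered, then `e^{ct} M(τ+t, θ_t ω)² → 0` as `t → -∞` for all
`c > 0` and `τ ∈ ℝ`; in particular the family of closed balls in `L²(ℝⁿ)` of radii
`c₀ M(τ,ω)` is tempered. -/
theorem absorbing_radius_tempered
    (lam α δ : ℝ) (hlam : 0 < lam) (hα : 0 < α) (hδ0 : 0 ≤ δ) (hδ : δ < lam)
    (ω : ℝ → ℝ) (hω : Continuous ω)
    (hωbot : Tendsto (fun t => ω t / t) atBot (𝓝 0))
    (hωtop : Tendsto (fun t => ω t / t) atTop (𝓝 0))
    (h : ℝ → ℝ) (hmeas : Measurable h) (hpos : ∀ s, 0 ≤ h s)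
    (hloc : LocallyIntegrable h volume)
    (htemp : ∀ c > (0:ℝ),
        Tendsto (fun t => ENNReal.ofReal (Real.exp (c * t)) *
            ∫⁻ s in Iic (0:ℝ), ENNReal.ofReal (Real.exp (δ * s) * h (s + t)))
          atBot (𝓝 0)) :
    (∀ c > (0:ℝ), ∀ τ : ℝ,
        Tendsto (fun t => ENNReal.ofReal (Real.exp (c * t)) *
            M2 lam α h (τ + t) (pathShift t ω))
          atBot (𝓝 0)) ∧
    (∀ (n : ℕ) (c₀ : ℝ), 0 < c₀ → ∀ c > (0:ℝ), ∀ τ : ℝ,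
        Tendsto (fun t => Real.exp (c * t) *
            sSup ((fun u => ‖u‖) ''
              {u : L2Space n |
                ‖u‖ ≤ c₀ * Real.sqrt (M2 lam α h (τ + t) (pathShift t ω)).toReal}))
          atBot (𝓝 0)) :=
  absorbing_radius_tempered_general lam α δ hlam hα hδ ω hω hωbot hωtop h hpos htemp

end
end

section
/- For every τ ∈ ℝ, lim_{α→0⁺} ∫_{−∞}^{0} e^{λs} e^{−2αω(s)} (1 + h(s+τ)) ds = ∫_{−∞}^{0} e^{λs} (1 + h(s+τ)) ds. Consequently, the radii M_α(τ,ω) = c₀ (∫_{−∞}^{0} e^{λs} e^{−2αω(s)}(1 + h(s+τ)) ds)^{1/2} of the absorbing balls satisfy limsup_{α→0⁺} M_α(τ,ω) = M_0(τ) = c₀ (∫_{−∞}^{0} e^{λs}(1 + h(s+τ)) ds)^{1/2} for any fixed constant c₀ > 0. -/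
open Set MeasureTheory Filter Topology ENNReal

/-!
Since `ω` is continuous and `ω(s)/s → 0` as `s → -∞`, for every `ε > 0` there is `C ≥ 0` with
`|ω(s)| ≤ ε|s| + C` for `s ≤ 0`. Hence for `0 < α ≤ 1` the integrand is dominated by
`e^{2C} e^{(λ-2ε)s} (1 + h(s+τ))`, which is integrable on `(-∞, 0]` as soon as
`max δ 0 < λ - 2ε`, by the integrability of `e^{δs} h(s)`. Dominated convergence gives the limit of
the integrals; it is finite, so `toReal` and `√` pass to the limit and the `limsup` of the radii
is their limit `M₀(τ)`.
-/

open Real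

lemma exists_abs_le_mul_abs_add_of_tendsto_div_atBot {ω : ℝ → ℝ} (hω : Continuous ω)
    (hlim : Tendsto (fun s => ω s / s) atBot (𝓝 0)) {ε : ℝ} (hε : 0 < ε) :
    ∃ C, 0 ≤ C ∧ ∀ s ≤ 0, |ω s| ≤ ε * |s| + C := by
  have hlittle : ω =o[atBot] id :=
    (Asymptotics.isLittleO_iff_tendsto' <| (eventually_lt_atBot 0).mono
      fun s hs hs0 => absurd hs0 hs.ne).mpr hlim
  obtain ⟨B, hB⟩ := eventually_atBot.mp (hlittle.def hε)
  obtain ⟨C, hC⟩ := (isCompact_Icc (a := B) (b := 0)).exists_bound_of_continuousOn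
    hω.continuousOn
  refine ⟨max C 0, le_max_right _ _, fun s hs => ?_⟩
  rcases le_total s B with hsB | hBs
  · have := hB s hsB
    simp only [Real.norm_eq_abs, id] at this
    linarith [le_max_right C 0]
  · have := hC s ⟨hBs, hs⟩
    rw [Real.norm_eq_abs] at this
    nlinarith [le_max_left C 0, abs_nonneg s]

lemma ofReal_mul_le_ofReal_mul {a b : ℝ} (ha : 0 ≤ a) (hab : a ≤ b) (x : ℝ) :
    ENNReal.ofReal (a * x) ≤ ENNReal.ofReal (b * x) := by
  rw [ENNReal.ofReal_mul ha, ENNReal.ofReal_mul (ha.trans hab)]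
  gcongr

lemma exp_mul_exp_le_of_abs_le {lam ε C α s w : ℝ} (hα₀ : 0 ≤ α) (hα₁ : α ≤ 1) (hε : 0 ≤ ε)
    (hC : 0 ≤ C) (hs : s ≤ 0) (hw : |w| ≤ ε * |s| + C) :
    exp (lam * s) * exp (-2 * α * w) ≤ exp (2 * C) * exp ((lam - 2 * ε) * s) := by
  rw [← exp_add, ← exp_add, exp_le_exp]
  rw [abs_of_nonpos hs] at hw
  have hslack : 0 ≤ (1 - α) * (ε * -s + C) :=
    mul_nonneg (sub_nonneg.mpr hα₁) (add_nonneg (mul_nonneg hε (neg_nonneg.mpr hs)) hC)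
  nlinarith [neg_abs_le w]

lemma setLIntegral_Iic_zero_ofReal_exp_mul_comp_add (δ τ : ℝ) (f : ℝ → ℝ) :
    ∫⁻ s in Iic 0, ENNReal.ofReal (exp (δ * s) * f (s + τ)) =
      ENNReal.ofReal (exp (-(δ * τ))) * ∫⁻ u in Iic τ, ENNReal.ofReal (exp (δ * u) * f u) := by
  have hshift := (measurePreserving_add_right volume τ).setLIntegral_comp_preimage_emb
    (measurableEmbedding_addRight τ) (fun u => ENNReal.ofReal (exp (δ * u) * f u)) (Iic τ)
  rw [preimage_add_const_Iic, sub_self] at hshift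
  rw [← hshift, ← lintegral_const_mul' _ _ ofReal_ne_top]
  refine setLIntegral_congr_fun measurableSet_Iic fun s _ => ?_
  rw [← ENNReal.ofReal_mul (exp_nonneg _), ← mul_assoc, ← exp_add]
  ring_nf

lemma setLIntegral_Iic_zero_ofReal_exp_mul_one_add_ne_top {c δ : ℝ} {f : ℝ → ℝ} (hc : 0 < c)
    (hδc : δ ≤ c) (hf : Measurable f)
    (hfin : ∫⁻ s in Iic 0, ENNReal.ofReal (exp (δ * s) * f s) ≠ ⊤) :
    ∫⁻ s in Iic 0, ENNReal.ofReal (exp (c * s) * (1 + f s)) ≠ ⊤ := by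
  have hexp : ∫⁻ s in Iic (0 : ℝ), ENNReal.ofReal (exp (c * s)) ≠ ⊤ :=
    ((integrableOn_exp_mul_Iic hc 0).setLIntegral_lt_top).ne
  refine ne_top_of_le_ne_top (add_ne_top.mpr ⟨hexp, hfin⟩) ?_
  rw [← lintegral_add_left (by fun_prop)]
  refine setLIntegral_mono (by fun_prop) fun s (hs : s ≤ 0) => ?_
  rw [mul_one_add]
  refine ofReal_add_le.trans (add_le_add_right ?_ _)
  exact ofReal_mul_le_ofReal_mul (exp_nonneg _)
    (exp_le_exp.mpr (mul_le_mul_of_nonpos_right hδc hs)) _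

theorem tendsto_setLIntegral_exp_mul_exp_nhdsGT_zero {lam ε C : ℝ} {ω g : ℝ → ℝ}
    (hω : Measurable ω) (hg : Measurable g) (hε : 0 ≤ ε) (hC : 0 ≤ C)
    (hωle : ∀ s ≤ 0, |ω s| ≤ ε * |s| + C)
    (hfin : ∫⁻ s in Iic 0, ENNReal.ofReal (exp ((lam - 2 * ε) * s) * g s) ≠ ⊤) :
    Tendsto (fun α => ∫⁻ s in Iic 0, ENNReal.ofReal (exp (lam * s) * exp (-2 * α * ω s) * g s))
      (𝓝[>] 0) (𝓝 (∫⁻ s in Iic 0, ENNReal.ofReal (exp (lam * s) * g s))) := by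
  refine tendsto_lintegral_filter_of_dominated_convergence
    (fun s => ENNReal.ofReal (exp (2 * C)) * ENNReal.ofReal (exp ((lam - 2 * ε) * s) * g s))
    (Eventually.of_forall fun α => by fun_prop) ?_ ?_ ?_
  · filter_upwards [Ioc_mem_nhdsGT zero_lt_one] with α hα
    refine (ae_restrict_iff' measurableSet_Iic).mpr (Eventually.of_forall fun s (hs : s ≤ 0) => ?_)
    rw [← ENNReal.ofReal_mul (exp_nonneg _), ← mul_assoc]
    exact ofReal_mul_le_ofReal_mul (by positivity)
      (exp_mul_exp_le_of_abs_le hα.1.le hα.2 hε hC hs (hωle s hs)) _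
  · rw [lintegral_const_mul' _ _ ofReal_ne_top]
    exact mul_ne_top ofReal_ne_top hfin
  · refine Eventually.of_forall fun s => ?_
    have hcont : Continuous fun α : ℝ =>
        ENNReal.ofReal (exp (lam * s) * exp (-2 * α * ω s) * g s) :=
      ENNReal.continuous_ofReal.comp (by fun_prop)
    simpa using (hcont.tendsto 0).mono_left nhdsWithin_le_nhds

theorem absorbing_radius_convergence_general
    (lam δ : ℝ) (hlam : 0 < lam) (hδ : δ < lam)
    (ω : ℝ → ℝ) (hω : Continuous ω)
    (hωbot : Tendsto (fun s => ω s / s) atBot (𝓝 0))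
    (h : ℝ → ℝ) (hmeas : Measurable h)
    (hint : ∀ τ : ℝ, ∫⁻ s in Iic τ, ENNReal.ofReal (Real.exp (δ * s) * h s) < ⊤)
    (τ : ℝ) :
    Tendsto (fun α : ℝ =>
        ∫⁻ s in Iic (0:ℝ),
          ENNReal.ofReal (Real.exp (lam * s) * Real.exp (-2 * α * ω s) * (1 + h (s + τ))))
      (𝓝[>] 0)
      (𝓝 (∫⁻ s in Iic (0:ℝ), ENNReal.ofReal (Real.exp (lam * s) * (1 + h (s + τ))))) ∧
    ∀ c₀ : ℝ, 0 < c₀ →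
      Filter.limsup (fun α : ℝ => c₀ * Real.sqrt
          (∫⁻ s in Iic (0:ℝ),
            ENNReal.ofReal
              (Real.exp (lam * s) * Real.exp (-2 * α * ω s) * (1 + h (s + τ)))).toReal)
        (𝓝[>] (0:ℝ))
      = c₀ * Real.sqrt
          (∫⁻ s in Iic (0:ℝ),
            ENNReal.ofReal (Real.exp (lam * s) * (1 + h (s + τ)))).toReal := by
  -- `lam - 2 * ε` lies strictly between `max δ 0` and `lam`.
  set ε := (lam - max δ 0) / 4 with hε_def
  have hε : 0 < ε := by linarith [max_lt hδ hlam]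
  obtain ⟨C, hC, hωle⟩ := exists_abs_le_mul_abs_add_of_tendsto_div_atBot hω hωbot hε
  have hshift : ∫⁻ s in Iic 0, ENNReal.ofReal (exp (δ * s) * h (s + τ)) ≠ ⊤ := by
    rw [setLIntegral_Iic_zero_ofReal_exp_mul_comp_add]
    exact mul_ne_top ofReal_ne_top (hint τ).ne
  have hdom : ∫⁻ s in Iic 0, ENNReal.ofReal (exp ((lam - 2 * ε) * s) * (1 + h (s + τ))) ≠ ⊤ :=
    setLIntegral_Iic_zero_ofReal_exp_mul_one_add_ne_top (by linarith [le_max_right δ 0])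
      (by linarith [le_max_left δ 0]) (hmeas.comp (measurable_add_const τ)) hshift
  have hlim := tendsto_setLIntegral_exp_mul_exp_nhdsGT_zero hω.measurable
    (measurable_const.add (hmeas.comp (measurable_add_const τ))) hε.le hC hωle hdom
  have hlim_ne_top : ∫⁻ s in Iic 0, ENNReal.ofReal (exp (lam * s) * (1 + h (s + τ))) ≠ ⊤ :=
    ne_top_of_le_ne_top hdom <| setLIntegral_mono (by fun_prop) fun s (hs : s ≤ 0) =>
      ofReal_mul_le_ofReal_mul (exp_nonneg _) (exp_le_exp.mpr (by nlinarith)) _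
  exact ⟨hlim, fun c₀ _ =>
    (((ENNReal.tendsto_toReal hlim_ne_top).comp hlim).sqrt.const_mul c₀).limsup_eq⟩

/-- As the noise intensity `α → 0⁺`, the squared radii
`∫_{-∞}^{0} e^{λs} e^{-2αω(s)} (1 + h(s+τ)) ds` of the absorbing balls converge to
`∫_{-∞}^{0} e^{λs} (1 + h(s+τ)) ds`; consequently
`limsup_{α→0⁺} M_α(τ,ω) = M_0(τ)` for the radii
`M_α(τ,ω) = c₀ (∫_{-∞}^{0} e^{λs} e^{-2αω(s)} (1 + h(s+τ)) ds)^{1/2}`. -/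
theorem absorbing_radius_convergence
    (lam δ : ℝ) (hlam : 0 < lam) (hδ0 : 0 ≤ δ) (hδ : δ < lam)
    (ω : ℝ → ℝ) (hω : Continuous ω)
    (hωbot : Tendsto (fun s => ω s / s) atBot (𝓝 0))
    (hωtop : Tendsto (fun s => ω s / s) atTop (𝓝 0))
    (h : ℝ → ℝ) (hmeas : Measurable h) (hpos : ∀ s, 0 ≤ h s)
    (hint : ∀ τ : ℝ, ∫⁻ s in Iic τ, ENNReal.ofReal (Real.exp (δ * s) * h s) < ⊤)
    (τ : ℝ) :
    Tendsto (fun α : ℝ =>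
        ∫⁻ s in Iic (0:ℝ),
          ENNReal.ofReal (Real.exp (lam * s) * Real.exp (-2 * α * ω s) * (1 + h (s + τ))))
      (𝓝[>] 0)
      (𝓝 (∫⁻ s in Iic (0:ℝ), ENNReal.ofReal (Real.exp (lam * s) * (1 + h (s + τ))))) ∧
    ∀ c₀ : ℝ, 0 < c₀ →
      Filter.limsup (fun α : ℝ => c₀ * Real.sqrt
          (∫⁻ s in Iic (0:ℝ),
            ENNReal.ofReal
              (Real.exp (lam * s) * Real.exp (-2 * α * ω s) * (1 + h (s + τ)))).toReal)
        (𝓝[>] (0:ℝ))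
      = c₀ * Real.sqrt
          (∫⁻ s in Iic (0:ℝ),
            ENNReal.ofReal (Real.exp (lam * s) * (1 + h (s + τ)))).toReal :=
  absorbing_radius_convergence_general lam δ hlam hδ ω hω hωbot h hmeas hint τ
end
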